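/- arXiv:2604.27628 — 6 statements merged into one kernel-verified Lean document; each statement's English description precedes it below -/
import Mathlib

section
/- Let s ∈ (0,1) and α ∈ (0, 1+s). The principal value P.V. ∫_ℝ (1 − |t|^α)/|1 − t|^{2+s} dt, understood as the limit as ε → 0⁺ of the integral over ℝ \ (1−ε, 1+ε), equals lim_{ε→0⁺} ∫_0^{1−ε} (1 − t^α)(1 − t^{s−α}) [ (1−t)^{-(2+s)} + (1+t)^{-(2+s)} ] dt. -/
/-!
Split `ℝ ∖ (1 - ε, 1 + ε)` at `0`. The reflection `t ↦ -t` and the inversion `t ↦ 1/t` carry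
`t ≤ 0` and `t ≥ 1 + ε` into `(0, 1)`; the inversion turns `(1 - t^α) |1 ∓ t|^(-2-s) dt` into
`(t^s - t^(s-α)) |1 ∓ t|^(-2-s) dt`, and adding this to the untransformed integrand produces the
factor `(1 - t^α)(1 - t^(s-α))`. This factor vanishes to second order at `t = 1`, so the folded
integrand is `O((1 - t)^(-s))` there and integrable on `(0, 1)` because `s < 1`. The image
`(0, 1/(1+ε))` of `[1 + ε, ∞)` overshoots `1 - ε` by an interval of length `O(ε²)` on which the
inverted integrand is `O(ε^(-1-s))`; this error is `O(ε^(1-s))`, and it vanishes for the same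
reason.
-/

open MeasureTheory intervalIntegral Filter Set Topology

lemma image_inv_Ioo_zero_inv {b : ℝ} (hb : 0 < b) : (fun u : ℝ => u⁻¹) '' Ioo 0 b⁻¹ = Ioi b := by
  rw [image_inv_eq_inv, inv_Ioo_0_left (inv_pos.2 hb), inv_inv]

lemma integral_Ioi_eq_intervalIntegral_inv_sq_mul_comp_inv {b : ℝ} (hb : 0 < b) (F : ℝ → ℝ) :
    ∫ x in Ioi b, F x = ∫ u in 0..b⁻¹, (u ^ 2)⁻¹ * F u⁻¹ := by
  rw [← image_inv_Ioo_zero_inv hb, integral_image_eq_integral_abs_deriv_smul measurableSet_Ioo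
      (fun u hu => (hasDerivAt_inv hu.1.ne').hasDerivWithinAt) inv_injective.injOn,
    integral_of_le (inv_pos.2 hb).le, integral_Ioc_eq_integral_Ioo]
  refine setIntegral_congr_fun measurableSet_Ioo fun u hu => ?_
  simp [abs_of_pos hu.1]

lemma integrableOn_Ioi_iff_intervalIntegrable_inv_sq_mul_comp_inv {b : ℝ} (hb : 0 < b)
    (F : ℝ → ℝ) :
    IntegrableOn F (Ioi b) ↔ IntervalIntegrable (fun u => (u ^ 2)⁻¹ * F u⁻¹) volume 0 b⁻¹ := by
  rw [← image_inv_Ioo_zero_inv hb, integrableOn_image_iff_integrableOn_abs_deriv_smul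
      measurableSet_Ioo (fun u hu => (hasDerivAt_inv hu.1.ne').hasDerivWithinAt)
      inv_injective.injOn,
    intervalIntegrable_iff_integrableOn_Ioo_of_le (inv_pos.2 hb).le]
  refine integrableOn_congr_fun (fun u hu => ?_) measurableSet_Ioo
  simp [abs_of_pos hu.1]

lemma integrableOn_Iic_iff_integrableOn_Ioi_comp_neg {f : ℝ → ℝ} {a : ℝ} :
    IntegrableOn f (Iic a) ↔ IntegrableOn (fun x => f (-x)) (Ioi (-a)) := by
  rw [← integrableOn_Ici_iff_integrableOn_Ioi, ← neg_Iic,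
    ← (Measure.measurePreserving_neg volume).integrableOn_comp_preimage
      (Homeomorph.neg ℝ).measurableEmbedding]
  rfl

lemma abs_one_sub_rpow_le_two_mul {γ t : ℝ} (hγ : γ ∈ Icc (-1) 2) (ht : t ∈ Icc (2⁻¹) 1) :
    |1 - t ^ γ| ≤ 2 * (1 - t) := by
  obtain ⟨ht₀, ht₁⟩ := ht
  have htpos : 0 < t := lt_of_lt_of_le (by norm_num) ht₀
  rcases le_total 0 γ with hγ₀ | hγ₀
  · have hsq : t ^ (2 : ℝ) ≤ t ^ γ := Real.rpow_le_rpow_of_exponent_ge htpos ht₁ hγ.2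
    rw [Real.rpow_two] at hsq
    rw [abs_of_nonneg (sub_nonneg.2 (Real.rpow_le_one htpos.le ht₁ hγ₀))]
    nlinarith
  · have hinv : t ^ γ ≤ t⁻¹ :=
      Real.rpow_neg_one t ▸ Real.rpow_le_rpow_of_exponent_ge htpos ht₁ hγ.1
    rw [abs_of_nonpos (sub_nonpos.2 (Real.one_le_rpow_of_pos_of_le_one_of_nonpos htpos ht₁ hγ₀))]
    have : t⁻¹ - 1 ≤ 2 * (1 - t) := by
      rw [inv_eq_one_div, div_sub_one htpos.ne', div_le_iff₀ htpos]; nlinarith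
    linarith

lemma rpow_le_two {γ t : ℝ} (hγ : -1 ≤ γ) (ht : t ∈ Icc (2⁻¹) 1) : t ^ γ ≤ 2 := by
  have htpos : 0 < t := lt_of_lt_of_le (by norm_num) ht.1
  calc t ^ γ ≤ t ^ (-1 : ℝ) := Real.rpow_le_rpow_of_exponent_ge htpos ht.2 hγ
    _ = t⁻¹ := Real.rpow_neg_one t
    _ ≤ 2 := by rw [inv_le_comm₀ htpos two_pos]; exact ht.1

lemma tendsto_intervalIntegral_sub_nhdsGT_zero {f : ℝ → ℝ} {a b : ℝ} (hab : a < b)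
    (hf : IntervalIntegrable f volume a b) :
    Tendsto (fun ε => ∫ t in a..(b - ε), f t) (𝓝[>] 0) (𝓝 (∫ t in a..b, f t)) := by
  have hsub : Tendsto (fun ε => b - ε) (𝓝[>] 0) (𝓝[uIcc a b] b) := by
    refine tendsto_nhdsWithin_iff.2 ⟨?_, ?_⟩
    · simpa using ((continuous_sub_left b).tendsto 0).mono_left nhdsWithin_le_nhds
    · filter_upwards [Ioo_mem_nhdsGT (sub_pos.2 hab)] with ε hε
      rw [uIcc_of_le hab.le]
      exact ⟨by linarith [hε.2], by linarith [hε.1]⟩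
  exact ((continuousOn_primitive_interval' hf left_mem_uIcc) b right_mem_uIcc).tendsto.comp hsub

noncomputable def pvIntegrand (s α t : ℝ) : ℝ := (1 - |t| ^ α) / |1 - t| ^ (2 + s)

/-- `σ = 1` folds the half-line `t > 0` onto `(0, 1)`, and `σ = -1` folds `t < 0`. -/
noncomputable def foldedIntegrand (s α σ t : ℝ) : ℝ :=
  (1 - t ^ α) * (1 - t ^ (s - α)) * |1 - σ * t| ^ (-(2 + s))

section
variable {s α σ t : ℝ}

lemma pvIntegrand_eq_mul_rpow_neg (t : ℝ) :
    pvIntegrand s α t = (1 - |t| ^ α) * |1 - t| ^ (-(2 + s)) := by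
  rw [pvIntegrand, div_eq_mul_inv, Real.rpow_neg (abs_nonneg _)]

lemma pvIntegrand_mul (hσ : |σ| = 1) (ht : 0 ≤ t) :
    pvIntegrand s α (σ * t) = (1 - t ^ α) * |1 - σ * t| ^ (-(2 + s)) := by
  rw [pvIntegrand_eq_mul_rpow_neg, abs_mul, hσ, one_mul, abs_of_nonneg ht]

lemma inv_sq_mul_pvIntegrand_mul_inv (hσ : |σ| = 1) (ht : 0 < t) :
    (t ^ 2)⁻¹ * pvIntegrand s α (σ * t⁻¹) =
      t ^ (s - α) * ((t ^ α - 1) * |1 - σ * t| ^ (-(2 + s))) := by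
  have hσσ : σ * σ = 1 := by rw [← abs_mul_abs_self, hσ, one_mul]
  have hdist : |1 - σ * t⁻¹| = |1 - σ * t| / t := by
    rw [eq_div_iff ht.ne', ← abs_of_pos ht, ← abs_mul, abs_of_pos ht,
      show (1 - σ * t⁻¹) * t = -σ * (1 - σ * t) by field_simp; linear_combination (-t) * hσσ,
      abs_mul, abs_neg, hσ, one_mul]
  rw [pvIntegrand_mul hσ (inv_nonneg.2 ht.le), hdist,
    Real.div_rpow (abs_nonneg _) ht.le, Real.inv_rpow ht.le, Real.rpow_sub ht,
    Real.rpow_neg ht.le, Real.rpow_add ht, Real.rpow_two]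
  have := Real.rpow_pos_of_pos ht α
  field_simp

lemma pvIntegrand_mul_add_inv_sq_mul_pvIntegrand_mul_inv (hσ : |σ| = 1) (ht : 0 < t) :
    pvIntegrand s α (σ * t) + (t ^ 2)⁻¹ * pvIntegrand s α (σ * t⁻¹) =
      foldedIntegrand s α σ t := by
  rw [pvIntegrand_mul hσ ht.le, inv_sq_mul_pvIntegrand_mul_inv hσ ht, foldedIntegrand]
  ring

lemma foldedIntegrand_neg_one_add_foldedIntegrand_one (ht : t ∈ Icc (-1) 1) :
    foldedIntegrand s α (-1) t + foldedIntegrand s α 1 t =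
      (1 - t ^ α) * (1 - t ^ (s - α)) * ((1 - t) ^ (-(2 + s)) + (1 + t) ^ (-(2 + s))) := by
  rw [foldedIntegrand, foldedIntegrand, neg_one_mul, one_mul, sub_neg_eq_add,
    abs_of_nonneg (by linarith [ht.1] : (0 : ℝ) ≤ 1 + t),
    abs_of_nonneg (by linarith [ht.2] : (0 : ℝ) ≤ 1 - t)]
  ring

lemma continuousOn_pvIntegrand (hα : 0 ≤ α) : ContinuousOn (pvIntegrand s α) {1}ᶜ := by
  refine ContinuousOn.div ?_ ?_ fun t ht => ?_
  · exact (continuous_const.sub (continuous_abs.rpow_const fun _ => Or.inr hα)).continuousOn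
  · exact (by fun_prop : Continuous fun t : ℝ => |1 - t|).continuousOn.rpow_const fun t ht =>
      Or.inl (abs_ne_zero.2 (sub_ne_zero.2 (Ne.symm ht)))
  · exact (Real.rpow_pos_of_pos (abs_pos.2 (sub_ne_zero.2 (Ne.symm ht))) _).ne'

lemma intervalIntegrable_pvIntegrand {b : ℝ} (hα : 0 ≤ α) (hb : b < 1) :
    IntervalIntegrable (pvIntegrand s α) volume 0 b :=
  ((continuousOn_pvIntegrand hα).mono fun _ ht =>
    (lt_of_le_of_lt ht.2 (max_lt zero_lt_one hb)).ne).intervalIntegrable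

lemma intervalIntegrable_pvIntegrand_comp_mul {a b : ℝ} (hα : 0 ≤ α)
    (h1 : ∀ t ∈ uIcc a b, σ * t ≠ 1) :
    IntervalIntegrable (fun t => pvIntegrand s α (σ * t)) volume a b :=
  ((continuousOn_pvIntegrand hα).comp (continuous_const_mul σ).continuousOn h1).intervalIntegrable

lemma intervalIntegrable_inv_sq_mul_pvIntegrand_mul_inv {b : ℝ} (hσ : |σ| = 1) (hα : 0 ≤ α)
    (hαs : α < 1 + s) (hb : 0 ≤ b) (h1 : ∀ t ∈ Icc 0 b, σ * t ≠ 1) :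
    IntervalIntegrable (fun t => (t ^ 2)⁻¹ * pvIntegrand s α (σ * t⁻¹)) volume 0 b := by
  have hcont : ContinuousOn (fun t => (t ^ α - 1) * |1 - σ * t| ^ (-(2 + s))) (uIcc 0 b) := by
    rw [uIcc_of_le hb]
    exact ((continuous_id.rpow_const fun _ => Or.inr hα).sub continuous_const).continuousOn.mul
      ((by fun_prop : Continuous fun t : ℝ => |1 - σ * t|).continuousOn.rpow_const fun t ht =>
        Or.inl (abs_ne_zero.2 (sub_ne_zero.2 (h1 t ht).symm)))
  refine ((intervalIntegrable_rpow' (by linarith : -1 < s - α)).mul_continuousOn hcont).congr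
    fun t ht => ?_
  rw [uIoc_of_le hb] at ht
  exact (inv_sq_mul_pvIntegrand_mul_inv hσ ht.1).symm

lemma intervalIntegrable_inv_sq_mul_pvIntegrand_inv {b : ℝ} (hα : 0 ≤ α) (hαs : α < 1 + s)
    (hb₀ : 0 ≤ b) (hb : b < 1) :
    IntervalIntegrable (fun u => (u ^ 2)⁻¹ * pvIntegrand s α u⁻¹) volume 0 b := by
  simpa using intervalIntegrable_inv_sq_mul_pvIntegrand_mul_inv (σ := 1) abs_one hα hαs hb₀
    fun t ht => by rw [one_mul]; exact (ht.2.trans_lt hb).ne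

lemma intervalIntegrable_foldedIntegrand {b : ℝ} (hσ : |σ| = 1) (hα : 0 ≤ α) (hαs : α < 1 + s)
    (hb : 0 ≤ b) (h1 : ∀ t ∈ Icc 0 b, σ * t ≠ 1) :
    IntervalIntegrable (foldedIntegrand s α σ) volume 0 b := by
  refine ((intervalIntegrable_pvIntegrand_comp_mul (s := s) hα (uIcc_of_le hb ▸ h1)).add
    (intervalIntegrable_inv_sq_mul_pvIntegrand_mul_inv hσ hα hαs hb h1)).congr fun t ht => ?_
  rw [uIoc_of_le hb] at ht
  exact pvIntegrand_mul_add_inv_sq_mul_pvIntegrand_mul_inv hσ ht.1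

lemma abs_foldedIntegrand_one_le (hα : 0 ≤ α) (hαs : α < 1 + s) (hs : s < 1)
    (ht : t ∈ Ico (2⁻¹) 1) : |foldedIntegrand s α 1 t| ≤ 4 * (1 - t) ^ (-s) := by
  have ht' : t ∈ Icc (2⁻¹) 1 := Ico_subset_Icc_self ht
  have hpos : 0 < 1 - t := sub_pos.2 ht.2
  have hpow : (1 - t) * (1 - t) * (1 - t) ^ (-(2 + s)) = (1 - t) ^ (-s) := by
    rw [show -s = 1 + (1 + -(2 + s)) by ring, Real.rpow_add hpos, Real.rpow_add hpos,
      Real.rpow_one, mul_assoc]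
  calc |foldedIntegrand s α 1 t|
      = |1 - t ^ α| * |1 - t ^ (s - α)| * (1 - t) ^ (-(2 + s)) := by
        rw [foldedIntegrand, one_mul, abs_of_pos hpos, abs_mul, abs_mul,
          abs_of_nonneg (Real.rpow_nonneg hpos.le _)]
    _ ≤ (2 * (1 - t)) * (2 * (1 - t)) * (1 - t) ^ (-(2 + s)) := by
        gcongr
        · exact abs_one_sub_rpow_le_two_mul ⟨by linarith, by linarith⟩ ht'
        · exact abs_one_sub_rpow_le_two_mul ⟨by linarith, by linarith⟩ ht'
    _ = 4 * (1 - t) ^ (-s) := by rw [← hpow]; ring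

lemma intervalIntegrable_foldedIntegrand_one (hα : 0 ≤ α) (hαs : α < 1 + s) (hs : s < 1) :
    IntervalIntegrable (foldedIntegrand s α 1) volume 0 1 := by
  have hleft : IntervalIntegrable (foldedIntegrand s α 1) volume 0 2⁻¹ :=
    intervalIntegrable_foldedIntegrand abs_one hα hαs (by norm_num) fun t ht => by
      rw [one_mul]; exact (ht.2.trans_lt (by norm_num)).ne
  have hdom : IntervalIntegrable (fun t : ℝ => 4 * (1 - t) ^ (-s)) volume 2⁻¹ 1 := by
    have := (((intervalIntegrable_rpow' (a := 0) (b := 2⁻¹) (by linarith : -1 < -s)).comp_sub_left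
      1).const_mul 4).symm
    rwa [sub_zero, show (1 : ℝ) - 2⁻¹ = 2⁻¹ by norm_num] at this
  refine hleft.trans (hdom.mono_fun' (by unfold foldedIntegrand; fun_prop) ?_)
  rw [uIoc_of_le (by norm_num), ← Measure.restrict_congr_set Ioo_ae_eq_Ioc, EventuallyLE,
    ae_restrict_iff' measurableSet_Ioo]
  exact ae_of_all _ fun t ht => abs_foldedIntegrand_one_le hα hαs hs (Ioo_subset_Ico_self ht)

lemma intervalIntegrable_inv_sq_mul_pvIntegrand_neg_inv (hα : 0 ≤ α) (hαs : α < 1 + s) :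
    IntervalIntegrable (fun u => (u ^ 2)⁻¹ * pvIntegrand s α (-u⁻¹)) volume 0 1 := by
  simpa using intervalIntegrable_inv_sq_mul_pvIntegrand_mul_inv (σ := -1) (by simp) hα hαs
    zero_le_one fun t ht => by linarith [ht.1]

lemma integrableOn_Ioi_one_pvIntegrand_neg (hα : 0 ≤ α) (hαs : α < 1 + s) :
    IntegrableOn (fun x => pvIntegrand s α (-x)) (Ioi 1) := by
  rw [integrableOn_Ioi_iff_intervalIntegrable_inv_sq_mul_comp_inv one_pos, inv_one]
  exact intervalIntegrable_inv_sq_mul_pvIntegrand_neg_inv hα hαs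

lemma intervalIntegrable_pvIntegrand_neg (hα : 0 ≤ α) :
    IntervalIntegrable (fun x => pvIntegrand s α (-x)) volume 0 1 := by
  simpa using intervalIntegrable_pvIntegrand_comp_mul (s := s) (σ := -1) (a := 0) (b := 1) hα
    fun t ht => by rw [uIcc_of_le zero_le_one] at ht; linarith [ht.1]

lemma integrableOn_Iic_zero_pvIntegrand (hα : 0 ≤ α) (hαs : α < 1 + s) :
    IntegrableOn (pvIntegrand s α) (Iic 0) := by
  rw [integrableOn_Iic_iff_integrableOn_Ioi_comp_neg, neg_zero, ← Ioc_union_Ioi_eq_Ioi zero_le_one]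
  exact ((intervalIntegrable_iff_integrableOn_Ioc_of_le zero_le_one).1
    (intervalIntegrable_pvIntegrand_neg hα)).union (integrableOn_Ioi_one_pvIntegrand_neg hα hαs)

lemma integral_Iic_zero_pvIntegrand (hα : 0 ≤ α) (hαs : α < 1 + s) :
    ∫ t in Iic 0, pvIntegrand s α t = ∫ t in 0..1, foldedIntegrand s α (-1) t := by
  have hneg := integral_comp_neg_Ioi 0 (pvIntegrand s α)
  rw [neg_zero] at hneg
  rw [← hneg, ← integral_interval_add_Ioi'
      (intervalIntegrable_pvIntegrand_neg hα) (integrableOn_Ioi_one_pvIntegrand_neg hα hαs),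
    integral_Ioi_eq_intervalIntegral_inv_sq_mul_comp_inv one_pos, inv_one,
    ← integral_add (intervalIntegrable_pvIntegrand_neg hα)
      (intervalIntegrable_inv_sq_mul_pvIntegrand_neg_inv hα hαs)]
  refine integral_congr_ae (ae_of_all _ fun t ht => ?_)
  rw [uIoc_of_le zero_le_one] at ht
  simpa using pvIntegrand_mul_add_inv_sq_mul_pvIntegrand_mul_inv (s := s) (α := α) (σ := -1)
    (by simp) ht.1

lemma integral_compl_Ioo_pvIntegrand (hα : 0 ≤ α) (hαs : α < 1 + s) {ε : ℝ}
    (hε : ε ∈ Ioo 0 1) :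
    ∫ t in (Ioo (1 - ε) (1 + ε))ᶜ, pvIntegrand s α t =
      (∫ t in 0..1, foldedIntegrand s α (-1) t) + (∫ t in 0..(1 - ε), foldedIntegrand s α 1 t) +
        ∫ t in (1 - ε)..(1 + ε)⁻¹, (t ^ 2)⁻¹ * pvIntegrand s α t⁻¹ := by
  obtain ⟨hε₀, hε₁⟩ := hε
  have hb₀ : 0 ≤ (1 + ε)⁻¹ := by positivity
  have hb₁ : (1 + ε)⁻¹ < 1 := inv_lt_one_of_one_lt₀ (by linarith)
  have hg := intervalIntegrable_pvIntegrand (s := s) hα (by linarith : 1 - ε < 1)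
  have hq := intervalIntegrable_inv_sq_mul_pvIntegrand_inv hα hαs (by linarith : 0 ≤ 1 - ε)
    (by linarith : 1 - ε < 1)
  have hq' := intervalIntegrable_inv_sq_mul_pvIntegrand_inv hα hαs hb₀ hb₁
  have hIic : IntegrableOn (pvIntegrand s α) (Iic (1 - ε)) := by
    rw [← Iic_union_Ioc_eq_Iic (by linarith : (0 : ℝ) ≤ 1 - ε)]
    exact (integrableOn_Iic_zero_pvIntegrand hα hαs).union
      ((intervalIntegrable_iff_integrableOn_Ioc_of_le (by linarith)).1 hg)
  have hIci : IntegrableOn (pvIntegrand s α) (Ici (1 + ε)) := by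
    rw [integrableOn_Ici_iff_integrableOn_Ioi,
      integrableOn_Ioi_iff_intervalIntegrable_inv_sq_mul_comp_inv (by linarith)]
    exact hq'
  have hcompl : (Ioo (1 - ε) (1 + ε))ᶜ = Iic (1 - ε) ∪ Ici (1 + ε) := by
    ext; simp [or_iff_not_imp_left]
  have hfold : ∫ t in 0..(1 - ε), foldedIntegrand s α 1 t =
      (∫ t in 0..(1 - ε), pvIntegrand s α t) +
        ∫ t in 0..(1 - ε), (t ^ 2)⁻¹ * pvIntegrand s α t⁻¹ := by
    rw [← integral_add hg hq]
    refine integral_congr_ae (ae_of_all _ fun t ht => ?_)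
    rw [uIoc_of_le (by linarith)] at ht
    simpa using (pvIntegrand_mul_add_inv_sq_mul_pvIntegrand_mul_inv (s := s) (α := α) abs_one
      ht.1).symm
  rw [hcompl, setIntegral_union (Iic_disjoint_Ici.2 (by linarith)) measurableSet_Ici hIic hIci,
    sub_eq_iff_eq_add'.1 (integral_Iic_sub_Iic (integrableOn_Iic_zero_pvIntegrand hα hαs) hIic),
    integral_Iic_zero_pvIntegrand hα hαs, integral_Ici_eq_integral_Ioi,
    integral_Ioi_eq_intervalIntegral_inv_sq_mul_comp_inv (by linarith),
    ← integral_add_adjacent_intervals hq (hq.symm.trans hq'), hfold]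
  ring

lemma abs_inv_sq_mul_pvIntegrand_inv_le (hα : 0 ≤ α) (hαs : α < 1 + s) (hs : s < 1)
    (ht : t ∈ Ico (2⁻¹) 1) : |(t ^ 2)⁻¹ * pvIntegrand s α t⁻¹| ≤ 4 * (1 - t) ^ (-(1 + s)) := by
  have ht' : t ∈ Icc (2⁻¹) 1 := Ico_subset_Icc_self ht
  have htpos : 0 < t := lt_of_lt_of_le (by norm_num) ht.1
  have hpos : 0 < 1 - t := sub_pos.2 ht.2
  have hpow : (1 - t) * (1 - t) ^ (-(2 + s)) = (1 - t) ^ (-(1 + s)) := by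
    rw [show -(1 + s) = 1 + -(2 + s) by ring, Real.rpow_add hpos, Real.rpow_one]
  have hq := inv_sq_mul_pvIntegrand_mul_inv (s := s) (α := α) abs_one htpos
  rw [one_mul, one_mul] at hq
  calc |(t ^ 2)⁻¹ * pvIntegrand s α t⁻¹|
      = t ^ (s - α) * |1 - t ^ α| * (1 - t) ^ (-(2 + s)) := by
        rw [hq, abs_of_pos hpos, abs_mul, abs_mul, abs_of_nonneg (Real.rpow_nonneg htpos.le _),
          abs_of_nonneg (Real.rpow_nonneg hpos.le _), abs_sub_comm, mul_assoc]
    _ ≤ 2 * (2 * (1 - t)) * (1 - t) ^ (-(2 + s)) := by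
        gcongr
        · exact rpow_le_two (by linarith) ht'
        · exact abs_one_sub_rpow_le_two_mul ⟨by linarith, by linarith⟩ ht'
    _ = 4 * (1 - t) ^ (-(1 + s)) := by rw [← hpow]; ring

lemma tendsto_integral_inv_sq_mul_pvIntegrand_inv (hα : 0 ≤ α) (hαs : α < 1 + s) (hs : s < 1) :
    Tendsto (fun ε => ∫ t in (1 - ε)..(1 + ε)⁻¹, (t ^ 2)⁻¹ * pvIntegrand s α t⁻¹)
      (𝓝[>] 0) (𝓝 0) := by
  have hbound : Tendsto (fun ε : ℝ => 16 * (ε / 2) ^ (1 - s)) (𝓝[>] 0) (𝓝 0) := by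
    have h := (((continuous_id.div_const (2 : ℝ)).rpow_const fun _ =>
      Or.inr (by linarith : (0 : ℝ) ≤ 1 - s)).const_mul 16).tendsto 0
    rw [id, zero_div, Real.zero_rpow (by linarith), mul_zero] at h
    exact h.mono_left nhdsWithin_le_nhds
  refine squeeze_zero_norm' ?_ hbound
  filter_upwards [Ioc_mem_nhdsGT (by norm_num : (0 : ℝ) < 2⁻¹)] with ε ⟨hε₀, hε₁⟩
  have hle : 1 - ε ≤ (1 + ε)⁻¹ := by
    rw [inv_eq_one_div, le_div_iff₀ (by linarith)]; nlinarith
  have hlen : |(1 + ε)⁻¹ - (1 - ε)| ≤ ε ^ 2 := by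
    rw [abs_le]
    constructor <;> rw [← sub_nonneg] <;> field_simp <;> nlinarith
  have hgap : ε / 2 ≤ 1 - (1 + ε)⁻¹ := by
    have : (1 + ε)⁻¹ ≤ 1 - ε / 2 := by
      rw [inv_eq_one_div, div_le_iff₀ (by linarith)]; nlinarith
    linarith
  calc ‖∫ t in (1 - ε)..(1 + ε)⁻¹, (t ^ 2)⁻¹ * pvIntegrand s α t⁻¹‖
      ≤ 4 * (ε / 2) ^ (-(1 + s)) * |(1 + ε)⁻¹ - (1 - ε)| := by
        refine norm_integral_le_of_norm_le_const fun t ht => ?_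
        rw [uIoc_of_le hle] at ht
        have htb : t < 1 := ht.2.trans_lt (inv_lt_one_of_one_lt₀ (by linarith))
        calc ‖(t ^ 2)⁻¹ * pvIntegrand s α t⁻¹‖ ≤ 4 * (1 - t) ^ (-(1 + s)) :=
              abs_inv_sq_mul_pvIntegrand_inv_le hα hαs hs ⟨by linarith [ht.1], htb⟩
          _ ≤ 4 * (ε / 2) ^ (-(1 + s)) := by
              gcongr 4 * ?_
              exact Real.rpow_le_rpow_of_nonpos (by positivity) (by linarith [ht.2]) (by linarith)
    _ ≤ 4 * (ε / 2) ^ (-(1 + s)) * ε ^ 2 := by gcongr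
    _ = 16 * (ε / 2) ^ (1 - s) := by
        rw [show 1 - s = -(1 + s) + 2 by ring, Real.rpow_add (by positivity), Real.rpow_two]
        ring

end

theorem pv_integral_identity (s α : ℝ) (hs : s ∈ Set.Ioo (0:ℝ) 1)
    (hα : α ∈ Set.Ioo (0:ℝ) (1 + s)) :
    ∃ L : ℝ,
      Tendsto (fun ε : ℝ =>
          ∫ t in (Set.Ioo (1 - ε) (1 + ε))ᶜ, (1 - |t| ^ α) / |1 - t| ^ (2 + s))
        (nhdsWithin 0 (Set.Ioi 0)) (nhds L) ∧
      Tendsto (fun ε : ℝ =>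
          ∫ t in (0:ℝ)..(1 - ε), (1 - t ^ α) * (1 - t ^ (s - α)) *
            ((1 - t) ^ (-(2 + s)) + (1 + t) ^ (-(2 + s))))
        (nhdsWithin 0 (Set.Ioi 0)) (nhds L) := by
  obtain ⟨hα₀, hαs⟩ := hα
  have hneg : IntervalIntegrable (foldedIntegrand s α (-1)) volume 0 1 :=
    intervalIntegrable_foldedIntegrand (by simp) hα₀.le hαs zero_le_one fun t ht => by
      linarith [ht.1]
  have hone := intervalIntegrable_foldedIntegrand_one hα₀.le hαs hs.2
  refine ⟨(∫ t in 0..1, foldedIntegrand s α (-1) t) + ∫ t in 0..1, foldedIntegrand s α 1 t, ?_, ?_⟩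
  · have h := ((tendsto_const_nhds (x := ∫ t in 0..1, foldedIntegrand s α (-1) t)).add
      (tendsto_intervalIntegral_sub_nhdsGT_zero zero_lt_one hone)).add
      (tendsto_integral_inv_sq_mul_pvIntegrand_inv hα₀.le hαs hs.2)
    rw [add_zero] at h
    refine h.congr' ?_
    filter_upwards [Ioo_mem_nhdsGT zero_lt_one] with ε hε
    exact (integral_compl_Ioo_pvIntegrand hα₀.le hαs hε).symm
  · refine ((tendsto_intervalIntegral_sub_nhdsGT_zero zero_lt_one hneg).add
      (tendsto_intervalIntegral_sub_nhdsGT_zero zero_lt_one hone)).congr' ?_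
    filter_upwards [Ioo_mem_nhdsGT zero_lt_one] with ε hε
    have hsub : uIcc 0 (1 - ε) ⊆ uIcc 0 1 := by
      rw [uIcc_of_le (by linarith [hε.2]), uIcc_of_le zero_le_one]
      exact Icc_subset_Icc_right (by linarith [hε.1])
    rw [← integral_add (hneg.mono_set hsub) (hone.mono_set hsub)]
    refine integral_congr fun t ht => foldedIntegrand_neg_one_add_foldedIntegrand_one ?_
    have ht' := hsub ht
    rw [uIcc_of_le zero_le_one] at ht'
    exact ⟨by linarith [ht'.1], ht'.2⟩
end

section
/- Let s ∈ (0,1) and α ∈ (0, s). Then P.V. ∫_ℝ (1 − |t|^α)/|1 − t|^{2+s} dt > 0, where the principal value is taken by excising the interval (1−ε, 1+ε) and letting ε → 0⁺. -/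
/-!
The substitution `t = u⁻¹` maps the tails `|t| > 1` onto `(-1, 1)` and turns the kernel
`k(t) = (1 - |t|^α) / |1 - t|^(2+s)` into `u⁻² k(u⁻¹) = (|u|^s - |u|^(s-α)) / |1 - u|^(2+s)`.
On `(-1, 1)` the sum of the two is `(1 - |t|^α)(1 - |t|^(s-α)) / |1 - t|^(2+s)`: positive, and
integrable because its numerator vanishes to second order at `t = 1`. The image of the right tail
`t ≥ 1 + ε` ends at `(1 + ε)⁻¹` rather than at `1 - ε`; the leftover piece `[1 - ε, (1 + ε)⁻¹)` has
length `O(ε²)` and carries an integrand of size `O(ε^(-1-s))`, so it vanishes as `ε → 0`. The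
principal value is therefore the (positive) integral of the symmetrised kernel over `(-1, 1)`.
-/

open MeasureTheory Filter Set Topology

section

variable {E : Type*} [NormedAddCommGroup E] [NormedSpace ℝ E]

theorem integrableOn_image_inv_iff {S : Set ℝ} (hS : MeasurableSet S) (h0 : (0 : ℝ) ∉ S)
    (h : ℝ → E) :
    IntegrableOn h (Inv.inv '' S) ↔ IntegrableOn (fun u => (u ^ 2)⁻¹ • h u⁻¹) S := by
  rw [integrableOn_image_iff_integrableOn_abs_deriv_smul hS
    (fun u hu => (hasDerivAt_inv (ne_of_mem_of_not_mem hu h0)).hasDerivWithinAt)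
    inv_injective.injOn]
  simp only [abs_neg, abs_inv, abs_sq]

theorem integral_image_inv {S : Set ℝ} (hS : MeasurableSet S) (h0 : (0 : ℝ) ∉ S) (h : ℝ → E) :
    ∫ x in Inv.inv '' S, h x = ∫ u in S, (u ^ 2)⁻¹ • h u⁻¹ := by
  rw [integral_image_eq_integral_abs_deriv_smul hS
    (fun u hu => (hasDerivAt_inv (ne_of_mem_of_not_mem hu h0)).hasDerivWithinAt)
    inv_injective.injOn]
  simp only [abs_neg, abs_inv, abs_sq]

theorem tendsto_setIntegral_Ioo_sub {f : ℝ → E} {a b : ℝ} (hab : a < b)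
    (hf : IntegrableOn f (Ioo a b)) :
    Tendsto (fun ε => ∫ t in Ioo a (b - ε), f t) (𝓝[>] 0) (𝓝 (∫ t in Ioo a b, f t)) := by
  have hprim : ContinuousWithinAt (fun x => ∫ t in a..x, f t) (Icc a b) b := by
    refine (intervalIntegral.continuousOn_primitive_interval ?_).mono
      (uIcc_of_le hab.le).symm.subset b (right_mem_Icc.2 hab.le)
    rwa [uIcc_of_le hab.le, integrableOn_Icc_iff_integrableOn_Ioo]
  have hsub : Tendsto (fun ε => b - ε) (𝓝[>] 0) (𝓝[Icc a b] b) := by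
    refine tendsto_nhdsWithin_iff.2 ⟨?_, ?_⟩
    · simpa using (tendsto_const_nhds.sub tendsto_id : Tendsto (fun ε : ℝ => b - ε) (𝓝 0) _)
        |>.mono_left nhdsWithin_le_nhds
    · filter_upwards [Ioo_mem_nhdsGT (sub_pos.2 hab)] with ε hε
      exact ⟨by linarith [hε.2], by linarith [hε.1]⟩
  have hIoo : ∀ x, a ≤ x → ∫ t in a..x, f t = ∫ t in Ioo a x, f t := fun x hx => by
    rw [intervalIntegral.integral_of_le hx, integral_Ioc_eq_integral_Ioo]
  rw [← hIoo b hab.le]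
  refine (hprim.tendsto.comp hsub).congr' ?_
  filter_upwards [Ioo_mem_nhdsGT (sub_pos.2 hab)] with ε hε
  exact hIoo _ (by linarith [hε.2])

end

theorem image_inv_Ioo_neg_one_zero_union {b : ℝ} (hb : 0 < b) :
    Inv.inv '' (Ioo (-1) 0 ∪ Ioo 0 b⁻¹) = Iio (-1) ∪ Ioi b := by
  rw [image_union, image_inv_eq_inv, image_inv_eq_inv, inv_Ioo_0_right (by norm_num),
    inv_Ioo_0_left (inv_pos.2 hb), inv_inv, inv_neg, inv_one]

theorem compl_Ioo_ae_eq {μ : Measure ℝ} [NullSingletonClass μ] {a b c : ℝ} (hca : c ≤ a) :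
    ((Ioo a b)ᶜ : Set ℝ) =ᵐ[μ] (Iio c ∪ Ioi b ∪ Ioo c a : Set ℝ) := by
  rw [← Ioi_inter_Iio, compl_inter, compl_Ioi, compl_Iio, ← Iio_union_Icc_eq_Iic hca,
    union_right_comm]
  exact ((ae_eq_refl _).union Ioi_ae_eq_Ici.symm).union Ioo_ae_eq_Icc.symm

theorem continuous_abs_rpow {p : ℝ} (hp : 0 ≤ p) : Continuous fun t : ℝ => |t| ^ p :=
  (Real.continuous_rpow_const hp).comp continuous_abs

theorem continuousOn_div_abs_one_sub_rpow {N : ℝ → ℝ} (hN : Continuous N) (p : ℝ)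
    {S : Set ℝ} (hS : (1 : ℝ) ∉ S) : ContinuousOn (fun t => N t / |1 - t| ^ p) S := by
  have hne : ∀ t ∈ S, |1 - t| ≠ 0 := fun t ht =>
    abs_ne_zero.2 (sub_ne_zero.2 (ne_of_mem_of_not_mem ht hS).symm)
  refine hN.continuousOn.div (fun t ht => ?_) fun t ht => (Real.rpow_pos_of_pos
    ((abs_nonneg _).lt_of_ne (hne t ht).symm) _).ne'
  exact ((continuous_const.sub continuous_id).abs.continuousAt.rpow_const
    (Or.inl (hne t ht))).continuousWithinAt

theorem one_sub_abs_rpow_nonneg {t β : ℝ} (ht : |t| ≤ 1) (hβ : 0 ≤ β) : 0 ≤ 1 - |t| ^ β :=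
  sub_nonneg.2 (Real.rpow_le_one (abs_nonneg t) ht hβ)

theorem one_sub_abs_rpow_le {t β : ℝ} (ht : |t| ≤ 1) (hβ : β ≤ 1) : 1 - |t| ^ β ≤ |1 - t| := by
  have h1 := Real.self_le_rpow_of_le_one (abs_nonneg t) ht hβ
  have h2 := abs_sub_abs_le_abs_sub 1 t
  rw [abs_one] at h2
  linarith

namespace PVKernel

noncomputable def kernel (s α t : ℝ) : ℝ := (1 - |t| ^ α) / |1 - t| ^ (2 + s)

/-- `u⁻² * kernel s α u⁻¹`: the kernel transported by the substitution `t = u⁻¹`. -/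
noncomputable def invKernel (s α u : ℝ) : ℝ := (|u| ^ s - |u| ^ (s - α)) / |1 - u| ^ (2 + s)

noncomputable def symKernel (s α t : ℝ) : ℝ :=
  (1 - |t| ^ α) * (1 - |t| ^ (s - α)) / |1 - t| ^ (2 + s)

variable {s α : ℝ}

theorem inv_sq_mul_kernel_inv {u : ℝ} (hu : u ≠ 0) :
    (u ^ 2)⁻¹ * kernel s α u⁻¹ = invKernel s α u := by
  have hu' : 0 < |u| := abs_pos.2 hu
  have h1 : |1 - u⁻¹| = |1 - u| / |u| := by
    rw [← abs_div, sub_div, div_self hu, one_div, abs_sub_comm]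
  have h2 : |u| ^ (2 + s) = |u| ^ 2 * |u| ^ s := by
    rw [Real.rpow_add hu', Real.rpow_two]
  have h3 : |u| ^ s = |u| ^ α * |u| ^ (s - α) := by
    rw [← Real.rpow_add hu', add_sub_cancel]
  rw [kernel, invKernel, h1, Real.div_rpow (abs_nonneg _) hu'.le, abs_inv, Real.inv_rpow hu'.le,
    div_div_eq_mul_div, ← sq_abs, h2, h3]
  field_simp

theorem kernel_add_invKernel (hs : s ≠ 0) (t : ℝ) :
    kernel s α t + invKernel s α t = symKernel s α t := by
  have h : |t| ^ s = |t| ^ α * |t| ^ (s - α) := by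
    rw [← Real.rpow_add' (abs_nonneg t) (by rwa [add_sub_cancel]), add_sub_cancel]
  rw [kernel, invKernel, symKernel, ← add_div, h]
  ring

section Continuity

variable {S : Set ℝ}

theorem continuousOn_kernel (hS : (1 : ℝ) ∉ S) (hα : 0 ≤ α) : ContinuousOn (kernel s α) S :=
  continuousOn_div_abs_one_sub_rpow (continuous_const.sub (continuous_abs_rpow hα)) _ hS

theorem continuousOn_invKernel (hS : (1 : ℝ) ∉ S) (hs : 0 ≤ s) (hαs : α ≤ s) :
    ContinuousOn (invKernel s α) S :=
  continuousOn_div_abs_one_sub_rpow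
    ((continuous_abs_rpow hs).sub (continuous_abs_rpow (sub_nonneg.2 hαs))) _ hS

theorem continuousOn_symKernel (hS : (1 : ℝ) ∉ S) (hα : 0 ≤ α) (hαs : α ≤ s) :
    ContinuousOn (symKernel s α) S :=
  continuousOn_div_abs_one_sub_rpow ((continuous_const.sub (continuous_abs_rpow hα)).mul
    (continuous_const.sub (continuous_abs_rpow (sub_nonneg.2 hαs)))) _ hS

end Continuity

theorem integrableOn_invKernel (hs : 0 ≤ s) (hαs : α ≤ s) {a c : ℝ} (hc : c < 1) :
    IntegrableOn (invKernel s α) (Ioo a c) :=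
  ((continuousOn_invKernel (fun h => hc.not_ge h.2) hs hαs).integrableOn_Icc).mono_set
    Ioo_subset_Icc_self

theorem integrableOn_kernel_outer (hs : 0 ≤ s) (hαs : α ≤ s) {b : ℝ} (hb : 1 < b) :
    IntegrableOn (kernel s α) (Iio (-1) ∪ Ioi b) := by
  have hb0 : 0 < b := one_pos.trans hb
  have h0 : (0 : ℝ) ∉ Ioo (-1) 0 ∪ Ioo 0 b⁻¹ := by simp
  rw [← image_inv_Ioo_neg_one_zero_union hb0,
    integrableOn_image_inv_iff (measurableSet_Ioo.union measurableSet_Ioo) h0]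
  exact ((integrableOn_invKernel hs hαs (inv_lt_one_of_one_lt₀ hb)).mono_set (union_subset
    (Ioo_subset_Ioo_right (inv_pos.2 hb0).le) (Ioo_subset_Ioo_left (by norm_num)))).congr_fun
    (fun u hu => (inv_sq_mul_kernel_inv (ne_of_mem_of_not_mem hu h0)).symm)
    (measurableSet_Ioo.union measurableSet_Ioo)

theorem setIntegral_kernel_outer {b : ℝ} (hb : 0 < b) :
    ∫ t in Iio (-1) ∪ Ioi b, kernel s α t = ∫ u in Ioo (-1) b⁻¹, invKernel s α u := by
  have h0 : (0 : ℝ) ∉ Ioo (-1) 0 ∪ Ioo 0 b⁻¹ := by simp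
  have hae : (Ioo (-1) 0 ∪ Ioo 0 b⁻¹ : Set ℝ) =ᵐ[volume] Ioo (-1) b⁻¹ :=
    ((ae_eq_refl _).union Ioo_ae_eq_Ico).trans
      (.of_eq (Ioo_union_Ico_eq_Ioo (by norm_num) (inv_pos.2 hb).le))
  rw [← image_inv_Ioo_neg_one_zero_union hb,
    integral_image_inv (measurableSet_Ioo.union measurableSet_Ioo) h0, ← setIntegral_congr_set hae]
  exact setIntegral_congr_fun (measurableSet_Ioo.union measurableSet_Ioo)
    fun u hu => inv_sq_mul_kernel_inv (ne_of_mem_of_not_mem hu h0)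

theorem symKernel_nonneg (hα : 0 ≤ α) (hαs : α ≤ s) {t : ℝ} (ht : |t| ≤ 1) :
    0 ≤ symKernel s α t :=
  div_nonneg (mul_nonneg (one_sub_abs_rpow_nonneg ht hα)
    (one_sub_abs_rpow_nonneg ht (sub_nonneg.2 hαs))) (Real.rpow_nonneg (abs_nonneg _) _)

theorem symKernel_pos (hα : 0 < α) (hαs : α < s) {t : ℝ} (ht : t ∈ Ioo (-1) 1) :
    0 < symKernel s α t := by
  have ht' : |t| < 1 := abs_lt.2 ht
  exact div_pos (mul_pos (sub_pos.2 (Real.rpow_lt_one (abs_nonneg t) ht' hα))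
    (sub_pos.2 (Real.rpow_lt_one (abs_nonneg t) ht' (sub_pos.2 hαs))))
    (Real.rpow_pos_of_pos (abs_pos.2 (sub_ne_zero.2 ht.2.ne')) _)

theorem symKernel_le (hα : 0 ≤ α) (hαs : α ≤ s) (hs1 : s ≤ 1) {t : ℝ} (ht : t ∈ Ioo (-1) 1) :
    symKernel s α t ≤ (1 - t) ^ (-s) := by
  have ht' : |t| ≤ 1 := abs_le.2 ⟨ht.1.le, ht.2.le⟩
  have h1t : 0 < 1 - t := sub_pos.2 ht.2
  have hnum : (1 - |t| ^ α) * (1 - |t| ^ (s - α)) ≤ (1 - t) ^ 2 := by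
    rw [← abs_of_pos h1t, sq]
    exact mul_le_mul (one_sub_abs_rpow_le ht' (hαs.trans hs1))
      (one_sub_abs_rpow_le ht' (by linarith)) (one_sub_abs_rpow_nonneg ht' (by linarith))
      (abs_nonneg _)
  rw [symKernel, abs_of_pos h1t]
  calc _ ≤ (1 - t) ^ 2 / (1 - t) ^ (2 + s) := by gcongr
    _ = (1 - t) ^ (-s) := by
      rw [Real.rpow_add h1t, Real.rpow_two, Real.rpow_neg h1t.le]
      field_simp

theorem integrableOn_symKernel (hα : 0 ≤ α) (hαs : α ≤ s) (hs1 : s < 1) :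
    IntegrableOn (symKernel s α) (Ioo (-1) 1) := by
  have hdom : IntegrableOn (fun t : ℝ => (1 - t) ^ (-s)) (Ioo (-1) 1) := by
    have := (intervalIntegral.intervalIntegrable_rpow' (a := 2) (b := 0)
      (neg_lt_neg hs1)).comp_sub_left 1
    norm_num at this
    exact (intervalIntegrable_iff_integrableOn_Ioo_of_le (by norm_num)).1 this
  refine hdom.mono' ((continuousOn_symKernel (fun h => h.2.false) hα hαs).aestronglyMeasurable
    measurableSet_Ioo) (ae_restrict_of_forall_mem measurableSet_Ioo fun t ht => ?_)
  rw [Real.norm_of_nonneg (symKernel_nonneg hα hαs (abs_le.2 ⟨ht.1.le, ht.2.le⟩))]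
  exact symKernel_le hα hαs hs1.le ht

theorem setIntegral_symKernel_pos (hα : 0 < α) (hαs : α < s) (hs1 : s < 1) :
    0 < ∫ t in Ioo (-1) 1, symKernel s α t := by
  rw [setIntegral_pos_iff_support_of_nonneg_ae
    (ae_restrict_of_forall_mem measurableSet_Ioo fun t ht => (symKernel_pos hα hαs ht).le)
    (integrableOn_symKernel hα.le hαs.le hs1)]
  exact (by simp : 0 < volume (Ioo (-1 : ℝ) 1)).trans_le
    (measure_mono fun t ht => ⟨(symKernel_pos hα hαs ht).ne', ht⟩)

theorem norm_invKernel_le (hα : 0 ≤ α) (hαs : α ≤ s) (hα1 : α ≤ 1) {u : ℝ}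
    (hu : u ∈ Ioo 0 1) : ‖invKernel s α u‖ ≤ (1 - u) ^ (-(1 + s)) := by
  obtain ⟨hu0, hu1⟩ := hu
  have h1u : 0 < 1 - u := sub_pos.2 hu1
  have hnum : |u ^ s - u ^ (s - α)| ≤ 1 - u := by
    rw [← add_sub_cancel α s, Real.rpow_add hu0, add_sub_cancel_left, abs_sub_comm,
      ← one_sub_mul, abs_of_nonneg (mul_nonneg (sub_nonneg.2 (Real.rpow_le_one hu0.le hu1.le hα))
        (Real.rpow_nonneg hu0.le _))]
    calc _ ≤ (1 - u) * 1 :=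
          mul_le_mul (by linarith [Real.self_le_rpow_of_le_one hu0.le hu1.le hα1])
            (Real.rpow_le_one hu0.le hu1.le (sub_nonneg.2 hαs)) (Real.rpow_nonneg hu0.le _)
            h1u.le
      _ = 1 - u := mul_one _
  rw [invKernel, abs_of_pos hu0, abs_of_pos h1u, Real.norm_eq_abs, abs_div,
    abs_of_pos (Real.rpow_pos_of_pos h1u _)]
  calc _ ≤ (1 - u) / (1 - u) ^ (2 + s) := by gcongr
    _ = (1 - u) ^ (-(1 + s)) := by
      rw [show 2 + s = 1 + (1 + s) by ring, Real.rpow_add h1u, Real.rpow_one,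
        Real.rpow_neg h1u.le]
      field_simp

theorem norm_setIntegral_invKernel_le (hα : 0 ≤ α) (hαs : α ≤ s) (hα1 : α ≤ 1) {ε : ℝ}
    (hε : ε ∈ Ioo 0 1) :
    ‖∫ u in Ico (1 - ε) (1 + ε)⁻¹, invKernel s α u‖ ≤ 2 ^ (1 + s) * ε ^ (1 - s) := by
  obtain ⟨hε0, hε1⟩ := hε
  have hpt : ∀ u ∈ Ico (1 - ε) (1 + ε)⁻¹, ‖invKernel s α u‖ ≤ (ε / 2) ^ (-(1 + s)) := by
    intro u hu
    have hu' : u * (1 + ε) < 1 := by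
      have := hu.2
      rwa [← one_div, lt_div_iff₀ (by linarith)] at this
    refine (norm_invKernel_le hα hαs hα1 ⟨by linarith [hu.1], by nlinarith [hu.1]⟩).trans
      (Real.rpow_le_rpow_of_nonpos (by positivity) (by nlinarith [hu.1]) (by linarith))
  have hlen : volume.real (Ico (1 - ε) (1 + ε)⁻¹) ≤ ε ^ 2 := by
    rw [Real.volume_real_Ico]
    refine max_le ?_ (sq_nonneg ε)
    have : (1 + ε)⁻¹ ≤ 1 - ε + ε ^ 2 := by
      rw [inv_le_iff_one_le_mul₀ (by linarith)]
      nlinarith [pow_pos hε0 3]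
    linarith
  calc _ ≤ (ε / 2) ^ (-(1 + s)) * volume.real (Ico (1 - ε) (1 + ε)⁻¹) :=
        norm_setIntegral_le_of_norm_le_const measure_Ico_lt_top hpt
    _ ≤ (ε / 2) ^ (-(1 + s)) * ε ^ 2 := by gcongr
    _ = 2 ^ (1 + s) * ε ^ (1 - s) := by
      rw [Real.rpow_neg (by positivity), Real.div_rpow hε0.le zero_le_two,
        show 1 - s = 2 - (1 + s) by ring, Real.rpow_sub hε0, Real.rpow_two]
      field_simp

theorem tendsto_setIntegral_invKernel (hα : 0 ≤ α) (hαs : α ≤ s) (hs1 : s < 1) :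
    Tendsto (fun ε => ∫ u in Ico (1 - ε) (1 + ε)⁻¹, invKernel s α u) (𝓝[>] 0) (𝓝 0) := by
  have hbound : Tendsto (fun ε : ℝ => 2 ^ (1 + s) * ε ^ (1 - s)) (𝓝[>] 0) (𝓝 0) := by
    have := ((Real.continuous_rpow_const (sub_nonneg.2 hs1.le)).tendsto 0).const_mul
      ((2 : ℝ) ^ (1 + s))
    rw [Real.zero_rpow (sub_ne_zero.2 hs1.ne'), mul_zero] at this
    exact this.mono_left nhdsWithin_le_nhds
  refine squeeze_zero_norm' ?_ hbound
  filter_upwards [Ioo_mem_nhdsGT one_pos] with ε hε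
  exact norm_setIntegral_invKernel_le hα hαs (by linarith) hε

theorem setIntegral_kernel_compl_Ioo (hs : 0 < s) (hα : 0 ≤ α) (hαs : α ≤ s) {ε : ℝ}
    (hε : ε ∈ Ioo 0 1) :
    ∫ t in (Ioo (1 - ε) (1 + ε))ᶜ, kernel s α t =
      (∫ t in Ioo (-1) (1 - ε), symKernel s α t) +
        ∫ u in Ico (1 - ε) (1 + ε)⁻¹, invKernel s α u := by
  obtain ⟨hε0, hε1⟩ := hε
  have hc1 : (1 + ε)⁻¹ < 1 := inv_lt_one_of_one_lt₀ (by linarith)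
  have hεc : 1 - ε ≤ (1 + ε)⁻¹ := by
    rw [← one_div, le_div_iff₀ (by linarith)]
    nlinarith
  have hf : IntegrableOn (kernel s α) (Ioo (-1) (1 - ε)) :=
    ((continuousOn_kernel (fun h => by linarith [h.2]) hα).integrableOn_Icc).mono_set
      Ioo_subset_Icc_self
  have hg : IntegrableOn (invKernel s α) (Ioo (-1) (1 - ε)) :=
    integrableOn_invKernel hs.le hαs (by linarith)
  have hsym : ∫ t in Ioo (-1) (1 - ε), symKernel s α t =
      (∫ t in Ioo (-1) (1 - ε), kernel s α t) + ∫ t in Ioo (-1) (1 - ε), invKernel s α t := by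
    simp only [← kernel_add_invKernel hs.ne']
    exact integral_add hf hg
  have hdisj : Disjoint (Iio (-1) ∪ Ioi (1 + ε)) (Ioo (-1) (1 - ε)) :=
    disjoint_left.2 fun t ht ht' => ht.elim (fun h => h.not_gt ht'.1)
      fun h => by linarith [mem_Ioi.1 h, ht'.2]
  rw [setIntegral_congr_set (compl_Ioo_ae_eq (by linarith : (-1 : ℝ) ≤ 1 - ε)),
    setIntegral_union hdisj measurableSet_Ioo (integrableOn_kernel_outer hs.le hαs (by linarith))
      hf, setIntegral_kernel_outer (by linarith),
    ← Ioo_union_Ico_eq_Ioo (by linarith : (-1 : ℝ) < 1 - ε) hεc,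
    setIntegral_union (Ico_disjoint_Ico_same.mono_left Ioo_subset_Ico_self) measurableSet_Ico hg
      ((integrableOn_invKernel hs.le hαs hc1).mono_set
        (Ico_subset_Ioo_left (by linarith : (-1 : ℝ) < 1 - ε))), hsym]
  ring

end PVKernel

open PVKernel in
theorem pv_integral_pos (s α : ℝ) (hs : s ∈ Set.Ioo (0:ℝ) 1)
    (hα : α ∈ Set.Ioo (0:ℝ) s) :
    ∃ L : ℝ, 0 < L ∧
      Tendsto (fun ε : ℝ =>
          ∫ t in (Set.Ioo (1 - ε) (1 + ε))ᶜ, (1 - |t| ^ α) / |1 - t| ^ (2 + s))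
        (nhdsWithin 0 (Set.Ioi 0)) (nhds L) := by
  obtain ⟨hs0, hs1⟩ := hs
  obtain ⟨hα0, hαs⟩ := hα
  refine ⟨_, setIntegral_symKernel_pos hα0 hαs hs1, ?_⟩
  have hlim := (tendsto_setIntegral_Ioo_sub (by norm_num)
    (integrableOn_symKernel hα0.le hαs.le hs1)).add
    (tendsto_setIntegral_invKernel hα0.le hαs.le hs1)
  rw [add_zero] at hlim
  refine hlim.congr' ?_
  filter_upwards [Ioo_mem_nhdsGT one_pos] with ε hε
  exact (setIntegral_kernel_compl_Ioo hs0 hα0.le hαs.le hε).symm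
end

section
/- Let s ∈ (0,1). Then P.V. ∫_ℝ (1 − |t|^s)/|1 − t|^{2+s} dt = 0, where the principal value is taken by excising the interval (1−ε, 1+ε) and letting ε → 0⁺. -/
/-!
The substitution `t ↦ 1 / t` turns `k(t) dt`, with `k(t) = (1 - |t|^s) / |1 - t|^(2+s)`,
into `-k(t) dt` and maps the complement of `(1 - ε, 1 + ε)` onto the complement of
`((1 + ε)⁻¹, (1 - ε)⁻¹)`. Hence twice the excised integral is the difference of the
integrals of `k` over two intervals of length `O(ε²)` at distance `≥ ε / 2` from `1`. There
`|1 - t^s| ≤ |1 - t|` gives `|k(t)| ≤ |1 - t|^(-(1+s)) = O(ε^(-(1+s)))`, so the excised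
integral is `O(ε^(1-s))`.
-/

open MeasureTheory Set Filter

theorem preimage_inv_Ioo_of_pos {a b : ℝ} (ha : 0 < a) (hb : 0 < b) :
    Inv.inv ⁻¹' Ioo a b = Ioo b⁻¹ a⁻¹ := by
  ext x
  simp only [mem_preimage, mem_Ioo]
  constructor
  · rintro ⟨hax, hxb⟩
    have hx : 0 < x := inv_pos.mp (ha.trans hax)
    exact ⟨(inv_lt_comm₀ hx hb).mp hxb, (lt_inv_comm₀ ha hx).mp hax⟩
  · rintro ⟨hbx, hxa⟩
    have hx : 0 < x := (inv_pos.mpr hb).trans hbx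
    exact ⟨(lt_inv_comm₀ ha hx).mpr hxa, (inv_lt_comm₀ hx hb).mpr hbx⟩

theorem setIntegral_preimage_inv_eq_neg {E : Type*} [NormedAddCommGroup E] [NormedSpace ℝ E]
    {f : ℝ → E} (hf : ∀ x ≠ 0, (x ^ 2)⁻¹ • f x⁻¹ = -f x) {S : Set ℝ}
    (hS : MeasurableSet S) :
    ∫ t in Inv.inv ⁻¹' S, f t = -∫ t in S, f t := by
  have hS0 : MeasurableSet (S \ {0}) := hS.diff (measurableSet_singleton 0)
  have himage : Inv.inv '' (S \ {0}) = Inv.inv ⁻¹' S \ {0} := by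
    rw [image_eq_preimage_of_inverse inv_inv inv_inv, preimage_sdiff]
    simp
  calc ∫ t in Inv.inv ⁻¹' S, f t = ∫ t in Inv.inv '' (S \ {0}), f t := by
        rw [himage, setIntegral_congr_set (sdiff_null_ae_eq_self (measure_singleton 0))]
    _ = ∫ x in S \ {0}, |-(x ^ 2)⁻¹| • f x⁻¹ :=
        integral_image_eq_integral_abs_deriv_smul hS0
          (fun x hx => (hasDerivAt_inv hx.2).hasDerivWithinAt) inv_injective.injOn f
    _ = ∫ x in S \ {0}, -f x := by
        refine setIntegral_congr_fun hS0 fun x hx => ?_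
        rw [abs_neg, abs_of_nonneg (by positivity), hf x hx.2]
    _ = -∫ t in S, f t := by
        rw [integral_neg, setIntegral_congr_set (sdiff_null_ae_eq_self (measure_singleton 0))]

theorem setIntegral_sub_setIntegral {X E : Type*} [MeasurableSpace X] [NormedAddCommGroup E]
    [NormedSpace ℝ E] {μ : Measure X} {f : X → E} {A B : Set X} (hA : MeasurableSet A)
    (hB : MeasurableSet B) (hfA : IntegrableOn f A μ) (hfB : IntegrableOn f B μ) :
    ∫ x in A, f x ∂μ - ∫ x in B, f x ∂μ =
      ∫ x in A \ B, f x ∂μ - ∫ x in B \ A, f x ∂μ := by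
  rw [← integral_inter_add_sdiff hB hfA, ← integral_inter_add_sdiff hA hfB, inter_comm]
  abel

noncomputable def pvKernel (s t : ℝ) : ℝ := (1 - |t| ^ s) / |1 - t| ^ (2 + s)

section

variable {s : ℝ}

theorem inv_sq_smul_pvKernel_inv (s x : ℝ) (hx : x ≠ 0) :
    (x ^ 2)⁻¹ • pvKernel s x⁻¹ = -pvKernel s x := by
  rcases eq_or_ne x 1 with rfl | hx1
  · simp [pvKernel]
  have hx0 : 0 < |x| := abs_pos.mpr hx
  have hx1' : 0 < |1 - x| := abs_pos.mpr (sub_ne_zero.mpr (Ne.symm hx1))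
  have habs : |1 - x⁻¹| = |1 - x| / |x| := by
    rw [eq_div_iff hx0.ne', ← abs_mul, show (1 - x⁻¹) * x = x - 1 by field_simp, abs_sub_comm]
  have hsplit : |x| ^ (2 + s) = |x| ^ 2 * |x| ^ s := by
    rw [Real.rpow_add hx0, Real.rpow_two]
  have : 0 < |x| ^ s := Real.rpow_pos_of_pos hx0 s
  have : 0 < |1 - x| ^ (2 + s) := Real.rpow_pos_of_pos hx1' _
  rw [pvKernel, pvKernel, habs, abs_inv, Real.div_rpow hx1'.le hx0.le, Real.inv_rpow hx0.le,
    hsplit, smul_eq_mul, ← sq_abs x]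
  field_simp
  ring

theorem abs_pvKernel_le_of_two_le_abs (hs : 0 ≤ s) {x : ℝ} (hx : 2 ≤ |x|) :
    |pvKernel s x| ≤ 3 ^ (2 + s) * (1 + |x|) ^ (-2 : ℝ) := by
  have hx0 : 0 < 1 + |x| := by linarith
  have hden : (1 + |x|) / 3 ≤ |1 - x| := by
    have := abs_sub_abs_le_abs_sub x 1
    rw [abs_one, abs_sub_comm] at this
    linarith
  have hnum : |1 - |x| ^ s| ≤ (1 + |x|) ^ s := by
    have h1 : 1 ≤ |x| ^ s := Real.one_le_rpow (by linarith) hs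
    rw [abs_sub_comm, abs_of_nonneg (by linarith)]
    linarith [Real.rpow_le_rpow (abs_nonneg x) (by linarith : |x| ≤ 1 + |x|) hs]
  have hden' : ((1 + |x|) / 3) ^ (2 + s) ≤ |1 - x| ^ (2 + s) :=
    Real.rpow_le_rpow (by positivity) hden (by linarith)
  calc |pvKernel s x| = |1 - |x| ^ s| / |1 - x| ^ (2 + s) := by
        rw [pvKernel, abs_div, abs_of_nonneg (Real.rpow_nonneg (abs_nonneg _) _)]
    _ ≤ (1 + |x|) ^ s / ((1 + |x|) / 3) ^ (2 + s) :=
        div_le_div₀ (by positivity) hnum (by positivity) hden'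
    _ = 3 ^ (2 + s) * (1 + |x|) ^ (-2 : ℝ) := by
        rw [Real.div_rpow hx0.le (by norm_num), div_div_eq_mul_div, mul_comm, mul_div_assoc,
          ← Real.rpow_sub hx0]
        ring_nf

theorem abs_pvKernel_le (hs0 : 0 ≤ s) (hs1 : s ≤ 1) {t : ℝ} (ht : 0 < t) :
    |pvKernel s t| ≤ |1 - t| ^ (-(1 + s)) := by
  rcases eq_or_ne t 1 with rfl | ht1
  · simpa [pvKernel] using Real.rpow_nonneg le_rfl _
  have hd : 0 < |1 - t| := abs_pos.mpr (sub_ne_zero.mpr (Ne.symm ht1))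
  have hnum : |1 - t ^ s| ≤ |1 - t| := by
    rcases le_total t 1 with h | h
    · have := Real.rpow_le_one ht.le h hs0
      have := Real.self_le_rpow_of_le_one ht.le h hs1
      rw [abs_of_nonneg (by linarith), abs_of_nonneg (by linarith)]
      linarith
    · have := Real.one_le_rpow h hs0
      have := Real.rpow_le_self_of_one_le h hs1
      rw [abs_of_nonpos (by linarith), abs_of_nonpos (by linarith)]
      linarith
  calc |pvKernel s t| = |1 - t ^ s| / |1 - t| ^ (2 + s) := by
        rw [pvKernel, abs_div, abs_of_pos ht, abs_of_nonneg (Real.rpow_nonneg hd.le _)]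
    _ ≤ |1 - t| / |1 - t| ^ (2 + s) := by gcongr
    _ = |1 - t| ^ (-(1 + s)) := by
        rw [← Real.rpow_one_sub' hd.le (by linarith)]
        ring_nf

theorem continuousAt_pvKernel (hs : 0 ≤ s) {x : ℝ} (hx : x ≠ 1) :
    ContinuousAt (pvKernel s) x := by
  have hpow : ∀ c : ℝ, 0 ≤ c → Continuous fun t : ℝ => |t| ^ c := fun c hc =>
    continuous_iff_continuousAt.mpr fun y =>
      (Real.continuousAt_rpow_const _ _ (Or.inr hc)).comp continuous_abs.continuousAt
  refine ((continuous_const.sub (hpow s hs)).continuousAt).div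
    ((hpow (2 + s) (by linarith)).comp (continuous_const.sub continuous_id)).continuousAt ?_
  exact (Real.rpow_pos_of_pos (abs_pos.mpr (sub_ne_zero.mpr (Ne.symm hx))) _).ne'

theorem integrableOn_pvKernel_compl_Ioo (hs : 0 ≤ s) {p q : ℝ} (hp : p < 1) (hq : 1 < q) :
    IntegrableOn (pvKernel s) (Ioo p q)ᶜ := by
  have hmeas : Measurable (pvKernel s) := by unfold pvKernel; fun_prop
  have hbounded : IntegrableOn (pvKernel s) (Icc (-2) 2 ∩ (Ioo p q)ᶜ) :=
    ContinuousOn.integrableOn_compact (isCompact_Icc.inter_right isOpen_Ioo.isClosed_compl)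
      fun x hx =>
        (continuousAt_pvKernel hs fun h => hx.2 (by rw [h]; exact ⟨hp, hq⟩)).continuousWithinAt
  have htail : IntegrableOn (pvKernel s) (Icc (-2) 2)ᶜ := by
    refine Integrable.mono' (((integrable_one_add_norm (E := ℝ) (μ := volume) (r := 2)
      (by norm_num)).const_mul (3 ^ (2 + s))).integrableOn) hmeas.aestronglyMeasurable
      ((ae_restrict_iff' measurableSet_Icc.compl).mpr (ae_of_all _ fun x hx => ?_))
    rw [mem_compl_iff, mem_Icc, ← abs_le, not_le] at hx
    exact abs_pvKernel_le_of_two_le_abs hs hx.le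
  refine (hbounded.union htail).mono_set fun x hx => ?_
  by_cases h : x ∈ Icc (-2) 2
  · exact Or.inl ⟨h, hx⟩
  · exact Or.inr h

theorem norm_setIntegral_pvKernel_le (hs0 : 0 ≤ s) (hs1 : s ≤ 1) {S : Set ℝ} {c d δ : ℝ}
    (hc : 0 < c) (hcd : c ≤ d) (hδ : 0 < δ) (hS : S ⊆ Icc c d)
    (hSδ : ∀ t ∈ S, δ ≤ |1 - t|) :
    ‖∫ t in S, pvKernel s t‖ ≤ δ ^ (-(1 + s)) * (d - c) :=
  calc ‖∫ t in S, pvKernel s t‖ ≤ δ ^ (-(1 + s)) * volume.real S :=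
        norm_setIntegral_le_of_norm_le_const ((measure_mono hS).trans_lt measure_Icc_lt_top)
          fun t ht => (abs_pvKernel_le hs0 hs1 (hc.trans_le (hS ht).1)).trans
            (Real.rpow_le_rpow_of_nonpos hδ (hSδ t ht) (by linarith))
    _ ≤ δ ^ (-(1 + s)) * volume.real (Icc c d) := by
        gcongr; exact measure_Icc_lt_top.ne
    _ = δ ^ (-(1 + s)) * (d - c) := by rw [Real.volume_real_Icc_of_le hcd]

theorem two_mul_setIntegral_pvKernel_compl_Ioo (hs : 0 ≤ s) {ε : ℝ} (hε0 : 0 < ε)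
    (hε1 : ε < 1) :
    2 * ∫ t in (Ioo (1 - ε) (1 + ε))ᶜ, pvKernel s t =
      (∫ t in Ioo (1 + ε)⁻¹ (1 - ε)⁻¹ \ Ioo (1 - ε) (1 + ε), pvKernel s t) -
        ∫ t in Ioo (1 - ε) (1 + ε) \ Ioo (1 + ε)⁻¹ (1 - ε)⁻¹, pvKernel s t := by
  have hinv : Inv.inv ⁻¹' (Ioo (1 - ε) (1 + ε))ᶜ = (Ioo (1 + ε)⁻¹ (1 - ε)⁻¹)ᶜ := by
    rw [preimage_compl, preimage_inv_Ioo_of_pos (by linarith) (by linarith)]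
  have hsymm := setIntegral_preimage_inv_eq_neg (inv_sq_smul_pvKernel_inv s)
    (measurableSet_Ioo (a := 1 - ε) (b := 1 + ε)).compl
  rw [hinv] at hsymm
  rw [← compl_sdiff_compl (x := Ioo (1 - ε) (1 + ε)),
    ← compl_sdiff_compl (y := Ioo (1 - ε) (1 + ε)),
    ← setIntegral_sub_setIntegral measurableSet_Ioo.compl measurableSet_Ioo.compl
      (integrableOn_pvKernel_compl_Ioo hs (by linarith) (by linarith))
      (integrableOn_pvKernel_compl_Ioo hs (inv_lt_one_of_one_lt₀ (by linarith))
        ((one_lt_inv₀ (by linarith)).mpr (by linarith))), hsymm]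
  ring

theorem norm_setIntegral_pvKernel_Ioo_inv_sdiff_le (hs0 : 0 ≤ s) (hs1 : s ≤ 1) {ε : ℝ}
    (hε0 : 0 < ε) (hε : ε ≤ 1 / 2) :
    ‖∫ t in Ioo (1 + ε)⁻¹ (1 - ε)⁻¹ \ Ioo (1 - ε) (1 + ε), pvKernel s t‖ ≤
      (ε / 2) ^ (-(1 + s)) * (2 * ε ^ 2) := by
  set b := (1 - ε)⁻¹
  have hb1 : b * (1 - ε) = 1 := inv_mul_cancel₀ (by linarith)
  have ha : 1 - ε < (1 + ε)⁻¹ := by rw [← one_div, lt_div_iff₀ (by linarith)]; nlinarith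
  have hsub : Ioo (1 + ε)⁻¹ b \ Ioo (1 - ε) (1 + ε) ⊆ Icc (1 + ε) b := by
    rintro x ⟨⟨hax, hxb⟩, hx⟩
    rw [mem_Ioo, not_and_or, not_lt, not_lt] at hx
    exact ⟨hx.resolve_left (not_le.mpr (by linarith)), hxb.le⟩
  refine (norm_setIntegral_pvKernel_le hs0 hs1 (by linarith) (by nlinarith)
    (by positivity) hsub fun t ht => ?_).trans
    (mul_le_mul_of_nonneg_left (by nlinarith) (by positivity))
  rw [abs_sub_comm, abs_of_nonneg (by linarith [(hsub ht).1])]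
  linarith [(hsub ht).1]

theorem norm_setIntegral_pvKernel_sdiff_Ioo_inv_le (hs0 : 0 ≤ s) (hs1 : s ≤ 1) {ε : ℝ}
    (hε0 : 0 < ε) (hε : ε ≤ 1 / 2) :
    ‖∫ t in Ioo (1 - ε) (1 + ε) \ Ioo (1 + ε)⁻¹ (1 - ε)⁻¹, pvKernel s t‖ ≤
      (ε / 2) ^ (-(1 + s)) * ε ^ 2 := by
  set a := (1 + ε)⁻¹
  have ha1 : a * (1 + ε) = 1 := inv_mul_cancel₀ (by linarith)
  have hb : 1 + ε < (1 - ε)⁻¹ := by rw [← one_div, lt_div_iff₀ (by linarith)]; nlinarith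
  have hsub : Ioo (1 - ε) (1 + ε) \ Ioo a (1 - ε)⁻¹ ⊆ Icc (1 - ε) a := by
    rintro x ⟨⟨hx1, hx2⟩, hx⟩
    rw [mem_Ioo, not_and_or, not_lt, not_lt] at hx
    exact ⟨hx1.le, hx.resolve_right (not_le.mpr (by linarith))⟩
  refine (norm_setIntegral_pvKernel_le hs0 hs1 (by linarith) (by nlinarith)
    (by positivity) hsub fun t ht => ?_).trans
    (mul_le_mul_of_nonneg_left (by nlinarith) (by positivity))
  rw [abs_of_nonneg (by nlinarith [(hsub ht).2])]
  nlinarith [(hsub ht).2]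

theorem norm_setIntegral_pvKernel_compl_Ioo_le (hs0 : 0 ≤ s) (hs1 : s ≤ 1) {ε : ℝ}
    (hε0 : 0 < ε) (hε : ε ≤ 1 / 2) :
    ‖∫ t in (Ioo (1 - ε) (1 + ε))ᶜ, pvKernel s t‖ ≤ 3 * 2 ^ s * ε ^ (1 - s) := by
  have hpow : (ε / 2) ^ (-(1 + s)) * ε ^ 2 = 2 * 2 ^ s * ε ^ (1 - s) := by
    rw [Real.div_rpow hε0.le zero_le_two, Real.rpow_neg zero_le_two, Real.rpow_add two_pos,
      Real.rpow_one, show 1 - s = -(1 + s) + 2 by ring, Real.rpow_add hε0, Real.rpow_two]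
    field_simp
  have h := norm_sub_le
    (∫ t in Ioo (1 + ε)⁻¹ (1 - ε)⁻¹ \ Ioo (1 - ε) (1 + ε), pvKernel s t)
    (∫ t in Ioo (1 - ε) (1 + ε) \ Ioo (1 + ε)⁻¹ (1 - ε)⁻¹, pvKernel s t)
  rw [← two_mul_setIntegral_pvKernel_compl_Ioo hs0 hε0 (by linarith), norm_mul,
    Real.norm_two] at h
  nlinarith [norm_setIntegral_pvKernel_Ioo_inv_sdiff_le hs0 hs1 hε0 hε,
    norm_setIntegral_pvKernel_sdiff_Ioo_inv_le hs0 hs1 hε0 hε]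

end

theorem pv_integral_zero (s : ℝ) (hs : s ∈ Set.Ioo (0:ℝ) 1) :
    Tendsto (fun ε : ℝ =>
        ∫ t in (Set.Ioo (1 - ε) (1 + ε))ᶜ, (1 - |t| ^ s) / |1 - t| ^ (2 + s))
      (nhdsWithin 0 (Set.Ioi 0)) (nhds 0) := by
  have hbound : ∀ᶠ ε in nhdsWithin 0 (Ioi 0),
      ‖∫ t in (Ioo (1 - ε) (1 + ε))ᶜ, pvKernel s t‖ ≤ 3 * 2 ^ s * ε ^ (1 - s) := by
    filter_upwards [Ioc_mem_nhdsGT (by norm_num : (0 : ℝ) < 1 / 2)] with ε hε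
    exact norm_setIntegral_pvKernel_compl_Ioo_le hs.1.le hs.2.le hε.1 hε.2
  have hlim :
      Tendsto (fun ε : ℝ => 3 * 2 ^ s * ε ^ (1 - s)) (nhdsWithin 0 (Ioi 0)) (nhds 0) := by
    have h : ContinuousAt (fun ε : ℝ => 3 * 2 ^ s * ε ^ (1 - s)) 0 :=
      continuousAt_const.mul (Real.continuousAt_rpow_const 0 (1 - s) (Or.inr (by linarith [hs.2])))
    simpa [Real.zero_rpow (by linarith [hs.2] : 1 - s ≠ 0)] using
      h.tendsto.mono_left nhdsWithin_le_nhds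
  exact squeeze_zero_norm' hbound hlim
end

section
/- Let s ∈ (0,1), α ∈ (0,1), and for ε ∈ (0,1/2) define I₄(ε) = ∫_{1−ε}^{1/(1+ε)} t^{s−α}(1 − t^α)[ (1−t)^{-(2+s)} + (1+t)^{-(2+s)} ] dt. Then 0 ≤ I₄(ε) ≤ C ε^{1−s} for some constant C depending only on s and α; in particular I₄(ε) → 0 as ε → 0⁺. -/
/-! On `[1 - ε, 1 / (1 + ε)] ⊆ (1/2, 1)` the integrand is nonnegative and, since
`t ^ (s - α) ≤ 2`, `1 - t ^ α ≤ 1 - t` and `(1 + t) ^ (-(2 + s)) ≤ (1 - t) ^ (-(2 + s))`, it is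
at most `4 (1 - t) ^ (-(1 + s))`. The latter integrates explicitly to
`ε ^ (-s) ((1 + ε) ^ s - 1) / s`, which Bernoulli's inequality bounds by `ε ^ (1 - s)`. -/

open MeasureTheory intervalIntegral Filter

lemma integral_one_sub_rpow_neg_one_sub_le {s ε : ℝ} (hs₀ : 0 < s) (hs₁ : s ≤ 1) (hε : 0 < ε) :
    ∫ t in (1 - ε)..(1 / (1 + ε)), (1 - t) ^ (-(1 + s)) ≤ ε ^ (1 - s) := by
  have hε' : 0 < 1 + ε := by linarith
  have h_near : 1 - 1 / (1 + ε) = ε / (1 + ε) := by field_simp; ring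
  have h_exp : -(1 + s) + 1 = -s := by ring
  have h_eval : ∫ t in (1 - ε)..(1 / (1 + ε)), (1 - t) ^ (-(1 + s))
      = ε ^ (-s) * ((1 + ε) ^ s - 1) / s := by
    have h_avoid : (0 : ℝ) ∉ Set.uIcc (ε / (1 + ε)) ε := Set.notMem_uIcc_of_lt (by positivity) hε
    rw [integral_comp_sub_left (fun u : ℝ => u ^ (-(1 + s))), h_near, sub_sub_cancel,
      integral_rpow (Or.inr ⟨by linarith, h_avoid⟩), h_exp, Real.div_rpow hε.le hε'.le,
      Real.rpow_neg hε'.le]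
    field_simp
    ring
  have h_bernoulli : (1 + ε) ^ s ≤ 1 + s * ε :=
    rpow_one_add_le_one_add_mul_self (by linarith) hs₀.le hs₁
  calc _ = ε ^ (-s) * ((1 + ε) ^ s - 1) / s := h_eval
    _ ≤ ε ^ (-s) * (s * ε) / s := by gcongr; linarith
    _ = ε ^ (1 - s) := by
      rw [sub_eq_neg_add, Real.rpow_add_one hε.ne']; field_simp

noncomputable def I4Integrand (s α t : ℝ) : ℝ :=
  t ^ (s - α) * (1 - t ^ α) * ((1 - t) ^ (-(2 + s)) + (1 + t) ^ (-(2 + s)))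

noncomputable def I4 (s α ε : ℝ) : ℝ :=
  ∫ t in (1 - ε)..(1 / (1 + ε)), I4Integrand s α t

section

variable {s α t ε : ℝ}

lemma one_sub_rpow_nonneg (hα : 0 ≤ α) (ht₀ : 0 < t) (ht₁ : t < 1) : 0 ≤ 1 - t ^ α := by
  linarith [Real.rpow_le_one ht₀.le ht₁.le hα]

lemma I4Integrand_nonneg (hα : 0 ≤ α) (ht₀ : 0 < t) (ht₁ : t < 1) : 0 ≤ I4Integrand s α t := by
  have h_gap := one_sub_rpow_nonneg hα ht₀ ht₁
  have h_dist : 0 ≤ 1 - t := by linarith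
  unfold I4Integrand
  positivity

lemma I4Integrand_le (hs : 0 ≤ s) (hα₀ : 0 ≤ α) (hα₁ : α ≤ 1) (ht₀ : 1 / 2 ≤ t) (ht₁ : t < 1) :
    I4Integrand s α t ≤ 4 * (1 - t) ^ (-(1 + s)) := by
  have ht : 0 < t := by linarith
  have hdist : 0 < 1 - t := by linarith
  have h_le_pow : t ≤ t ^ α := by
    simpa using Real.rpow_le_rpow_of_exponent_ge ht ht₁.le hα₁
  have h_weight : t ^ (s - α) ≤ 2 := by
    have hts : t ^ s ≤ 1 := Real.rpow_le_one ht.le ht₁.le hs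
    rw [Real.rpow_sub ht, div_le_iff₀ (by positivity)]
    linarith
  have h_far : (1 + t) ^ (-(2 + s)) ≤ (1 - t) ^ (-(2 + s)) :=
    Real.rpow_le_rpow_of_nonpos hdist (by linarith) (by linarith)
  have h_pow : (1 - t) ^ (-(1 + s)) = (1 - t) ^ (-(2 + s)) * (1 - t) := by
    rw [← Real.rpow_add_one hdist.ne']; ring_nf
  have h_gap := one_sub_rpow_nonneg hα₀ ht ht₁
  calc I4Integrand s α t
      ≤ (2 * (1 - t)) * (2 * (1 - t) ^ (-(2 + s))) := by
        unfold I4Integrand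
        gcongr
        all_goals linarith
    _ = 4 * (1 - t) ^ (-(1 + s)) := by rw [h_pow]; ring

lemma continuousOn_I4Integrand : ContinuousOn (I4Integrand s α) (Set.Ioo 0 1) := by
  unfold I4Integrand
  fun_prop (disch := intros; simp_all; linarith)

lemma one_sub_le_one_div_one_add (hε : -1 < ε) : 1 - ε ≤ 1 / (1 + ε) := by
  rw [le_div_iff₀ (by linarith)]
  nlinarith [sq_nonneg ε]

lemma Icc_one_sub_subset_Ioo (hε₀ : 0 < ε) (hε₁ : ε < 1 / 2) :
    Set.Icc (1 - ε) (1 / (1 + ε)) ⊆ Set.Ioo (1 / 2) 1 := by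
  have h_right : 1 / (1 + ε) < 1 := by rw [div_lt_one (by linarith)]; linarith
  exact fun t ⟨ht₀, ht₁⟩ => ⟨by linarith, by linarith⟩

lemma I4_nonneg (hα : 0 ≤ α) (hε₀ : 0 < ε) (hε₁ : ε < 1 / 2) : 0 ≤ I4 s α ε := by
  refine integral_nonneg (one_sub_le_one_div_one_add (by linarith)) fun t ht => ?_
  obtain ⟨ht₀, ht₁⟩ := Icc_one_sub_subset_Ioo hε₀ hε₁ ht
  exact I4Integrand_nonneg hα (by linarith) ht₁

lemma I4_le (hs₀ : 0 < s) (hs₁ : s ≤ 1) (hα₀ : 0 ≤ α) (hα₁ : α ≤ 1) (hε₀ : 0 < ε)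
    (hε₁ : ε < 1 / 2) : I4 s α ε ≤ 4 * ε ^ (1 - s) := by
  have hle := one_sub_le_one_div_one_add (show -1 < ε by linarith)
  have hsub := Icc_one_sub_subset_Ioo hε₀ hε₁
  have h_int : IntervalIntegrable (I4Integrand s α) volume (1 - ε) (1 / (1 + ε)) :=
    (continuousOn_I4Integrand.mono (hsub.trans (Set.Ioo_subset_Ioo_left (by norm_num))))
      |>.intervalIntegrable_of_Icc hle
  have h_int_bound : IntervalIntegrable (fun t => 4 * (1 - t) ^ (-(1 + s))) volume
      (1 - ε) (1 / (1 + ε)) := by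
    refine ContinuousOn.intervalIntegrable_of_Icc hle (continuousOn_const.mul ?_)
    exact ContinuousOn.rpow_const (by fun_prop) fun t ht => Or.inl (by linarith [(hsub ht).2])
  calc I4 s α ε ≤ ∫ t in (1 - ε)..(1 / (1 + ε)), 4 * (1 - t) ^ (-(1 + s)) :=
        integral_mono_on hle h_int h_int_bound fun t ht =>
          I4Integrand_le hs₀.le hα₀ hα₁ (hsub ht).1.le (hsub ht).2
    _ = 4 * ∫ t in (1 - ε)..(1 / (1 + ε)), (1 - t) ^ (-(1 + s)) := integral_const_mul _ _
    _ ≤ 4 * ε ^ (1 - s) := by gcongr; exact integral_one_sub_rpow_neg_one_sub_le hs₀ hs₁ hε₀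

lemma tendsto_I4_nhdsGT_zero (hs₀ : 0 < s) (hs₁ : s < 1) (hα₀ : 0 ≤ α) (hα₁ : α ≤ 1) :
    Tendsto (I4 s α) (nhdsWithin 0 (Set.Ioi 0)) (nhds 0) := by
  have h_small : ∀ᶠ ε in nhdsWithin (0 : ℝ) (Set.Ioi 0), ε ∈ Set.Ioo (0 : ℝ) (1 / 2) :=
    Ioo_mem_nhdsGT (by norm_num)
  have h_rpow : Tendsto (fun ε : ℝ => ε ^ (1 - s)) (nhdsWithin 0 (Set.Ioi 0)) (nhds 0) := by
    have := (Real.continuousAt_rpow_const 0 (1 - s) (Or.inr (by linarith))).tendsto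
    rw [Real.zero_rpow (by linarith)] at this
    exact this.mono_left nhdsWithin_le_nhds
  refine squeeze_zero' ?_ ?_ (by simpa using h_rpow.const_mul 4)
  · filter_upwards [h_small] with ε hε using I4_nonneg hα₀ hε.1 hε.2
  · filter_upwards [h_small] with ε hε using I4_le hs₀ hs₁.le hα₀ hα₁ hε.1 hε.2

end

theorem I4_estimate (s α : ℝ) (hs : s ∈ Set.Ioo (0:ℝ) 1) (hα : α ∈ Set.Ioo (0:ℝ) 1) :
    ∃ C : ℝ, 0 < C ∧
      (∀ ε ∈ Set.Ioo (0:ℝ) (1/2),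
        0 ≤ (∫ t in (1 - ε)..(1 / (1 + ε)), t ^ (s - α) * (1 - t ^ α) *
              ((1 - t) ^ (-(2 + s)) + (1 + t) ^ (-(2 + s)))) ∧
        (∫ t in (1 - ε)..(1 / (1 + ε)), t ^ (s - α) * (1 - t ^ α) *
              ((1 - t) ^ (-(2 + s)) + (1 + t) ^ (-(2 + s)))) ≤ C * ε ^ (1 - s)) ∧
      Tendsto (fun ε : ℝ => ∫ t in (1 - ε)..(1 / (1 + ε)), t ^ (s - α) * (1 - t ^ α) *
              ((1 - t) ^ (-(2 + s)) + (1 + t) ^ (-(2 + s))))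
        (nhdsWithin 0 (Set.Ioi 0)) (nhds 0) := by
  obtain ⟨hs₀, hs₁⟩ := hs
  obtain ⟨hα₀, hα₁⟩ := hα
  exact ⟨4, by norm_num,
    fun ε hε => ⟨I4_nonneg hα₀.le hε.1 hε.2, I4_le hs₀ hs₁.le hα₀.le hα₁.le hε.1 hε.2⟩,
    tendsto_I4_nhdsGT_zero hs₀ hs₁ hα₀.le hα₁.le⟩
end

section
/- Let n ∈ ℕ and s ∈ (0,1). Let E ⊂ ℝ^{n+1} be measurable with 0 ∈ ∂E, and suppose the unit ball B₁(e_{n+1}) centered at e_{n+1} is contained in E and that the fractional s-mean curvature H_{s,E}(0) exists in the principal-value sense with H_{s,E}(0) ≥ 0. Then ∫_{E \ B₁(e_{n+1})} |y|^{-(n+1+s)} dy ≤ (1/2) H_{s,B₁(e_{n+1})}(0), where H_{s,B₁(e_{n+1})}(0) is the (finite, positive) s-mean curvature of the unit ball at a boundary point. -/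
open MeasureTheory Filter

/-- The integrand in the definition of the fractional `s`-mean curvature of `A` at `x`. -/
noncomputable def nmcIntegrand (n : ℕ) (s : ℝ) (A : Set (EuclideanSpace ℝ (Fin (n + 1))))
    (x y : EuclideanSpace ℝ (Fin (n + 1))) : ℝ :=
  (Set.indicator Aᶜ (fun _ => (1:ℝ)) y - Set.indicator A (fun _ => (1:ℝ)) y) *
    ‖x - y‖ ^ (-((n : ℝ) + 1 + s))

/-- `H_{s,A}(x)` exists in the principal-value sense and equals `L`. -/
def HasFracMeanCurv (n : ℕ) (s : ℝ) (A : Set (EuclideanSpace ℝ (Fin (n + 1))))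
    (x : EuclideanSpace ℝ (Fin (n + 1))) (L : ℝ) : Prop :=
  Tendsto (fun ε : ℝ => ∫ y in (Metric.ball x ε)ᶜ, nmcIntegrand n s A x y)
    (nhdsWithin 0 (Set.Ioi 0)) (nhds L)

/-- `‖y‖ ^ (-r)` is integrable outside any ball around the origin, when `r > n+1`. -/
lemma aux_integrableOn_rpow (n : ℕ) {r : ℝ} (hrn : (n : ℝ) + 1 < r) {ε : ℝ} (hε : 0 < ε) :
    IntegrableOn (fun y : EuclideanSpace ℝ (Fin (n + 1)) => ‖y‖ ^ (-r))
      (Metric.ball (0 : EuclideanSpace ℝ (Fin (n + 1))) ε)ᶜ := by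
  have hr0 : (0:ℝ) < r := by
    have : (0:ℝ) ≤ (n:ℝ) := Nat.cast_nonneg n
    linarith
  have hfin : (Module.finrank ℝ (EuclideanSpace ℝ (Fin (n + 1))) : ℝ) < r := by
    rw [finrank_euclideanSpace]
    push_cast
    simpa using hrn
  have h1 : Integrable (fun y : EuclideanSpace ℝ (Fin (n + 1)) =>
      (ε / (1 + ε)) ^ (-r) * (1 + ‖y‖) ^ (-r)) :=
    (integrable_one_add_norm hfin).const_mul _
  refine (h1.integrableOn).mono' ?_ ?_
  · exact ((by fun_prop : Measurable fun y : EuclideanSpace ℝ (Fin (n+1)) => ‖y‖ ^ (-r)).aestronglyMeasurable).restrict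
  · rw [ae_restrict_iff' measurableSet_ball.compl]
    refine ae_of_all _ fun y hy => ?_
    have hy' : ε ≤ ‖y‖ := by
      simpa [Metric.mem_ball, dist_zero_right] using hy
    have hny : (0:ℝ) < ‖y‖ := lt_of_lt_of_le hε hy'
    have hkey : ε / (1 + ε) * (1 + ‖y‖) ≤ ‖y‖ := by
      rw [div_mul_eq_mul_div, div_le_iff₀ (by positivity)]
      nlinarith
    have h3 : ‖y‖ ^ (-r) ≤ (ε / (1 + ε) * (1 + ‖y‖)) ^ (-r) :=
      Real.rpow_le_rpow_of_nonpos (by positivity) hkey (by linarith)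
    rw [Real.mul_rpow (by positivity) (by positivity)] at h3
    rw [Real.norm_eq_abs, abs_of_nonneg (Real.rpow_nonneg (norm_nonneg _) _)]
    exact h3

/-- The nmc integrand is pointwise dominated by `‖y‖ ^ (-(n+1+s))`. -/
lemma aux_bound (n : ℕ) (s : ℝ) (A : Set (EuclideanSpace ℝ (Fin (n + 1))))
    (y : EuclideanSpace ℝ (Fin (n + 1))) :
    |nmcIntegrand n s A 0 y| ≤ ‖y‖ ^ (-((n : ℝ) + 1 + s)) := by
  have h1 : |Set.indicator Aᶜ (fun _ => (1:ℝ)) y - Set.indicator A (fun _ => (1:ℝ)) y| ≤ 1 := by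
    by_cases hy : y ∈ A <;> simp [Set.indicator_apply, hy]
  rw [nmcIntegrand, abs_mul, abs_of_nonneg (Real.rpow_nonneg (norm_nonneg _) _)]
  calc |Set.indicator Aᶜ (fun _ => (1:ℝ)) y - Set.indicator A (fun _ => (1:ℝ)) y| *
        ‖(0:EuclideanSpace ℝ (Fin (n+1))) - y‖ ^ (-((n : ℝ) + 1 + s))
      ≤ ‖(0:EuclideanSpace ℝ (Fin (n+1))) - y‖ ^ (-((n : ℝ) + 1 + s)) :=
        mul_le_of_le_one_left (Real.rpow_nonneg (norm_nonneg _) _) h1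
    _ = ‖y‖ ^ (-((n : ℝ) + 1 + s)) := by rw [zero_sub, norm_neg]

lemma aux_measurable (n : ℕ) (s : ℝ) {A : Set (EuclideanSpace ℝ (Fin (n + 1)))}
    (hA : MeasurableSet A) : Measurable (fun y => nmcIntegrand n s A 0 y) := by
  apply Measurable.mul
  · exact (measurable_const.indicator hA.compl).sub (measurable_const.indicator hA)
  · exact (by fun_prop : Measurable fun y : EuclideanSpace ℝ (Fin (n+1)) => ‖(0:EuclideanSpace ℝ (Fin (n+1))) - y‖ ^ (-((n : ℝ) + 1 + s)))

theorem extra_mass_bound (n : ℕ) (s : ℝ) (hs : s ∈ Set.Ioo (0:ℝ) 1)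
    (E : Set (EuclideanSpace ℝ (Fin (n + 1)))) (hEm : MeasurableSet E)
    (hball : Metric.ball (EuclideanSpace.single (Fin.last n) (1:ℝ)) 1 ⊆ E)
    (h0 : (0 : EuclideanSpace ℝ (Fin (n + 1))) ∈ frontier E)
    (LE : ℝ) (hE : HasFracMeanCurv n s E 0 LE) (hLE : 0 ≤ LE)
    (LB : ℝ)
    (hB : HasFracMeanCurv n s (Metric.ball (EuclideanSpace.single (Fin.last n) (1:ℝ)) 1) 0 LB) :
    (∫ y in E \ Metric.ball (EuclideanSpace.single (Fin.last n) (1:ℝ)) 1,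
        ‖y‖ ^ (-((n : ℝ) + 1 + s))) ≤ LB / 2 := by
  set B : Set (EuclideanSpace ℝ (Fin (n + 1))) := Metric.ball (EuclideanSpace.single (Fin.last n) (1:ℝ)) 1 with hBdef
  have hBm : MeasurableSet B := measurableSet_ball
  set D : Set (EuclideanSpace ℝ (Fin (n + 1))) := E \ B with hDdef
  have hDm : MeasurableSet D := hEm.diff hBm
  set r : ℝ := (n : ℝ) + 1 + s with hrdef
  have hr0 : (0:ℝ) < r := by have := hs.1; positivity
  have hrn : (n : ℝ) + 1 < r := by have := hs.1; simp only [hrdef]; linarith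
  set g : EuclideanSpace ℝ (Fin (n + 1)) → ℝ := fun y => ‖y‖ ^ (-r) with hgdef
  have hgnn : ∀ y, 0 ≤ g y := fun y => Real.rpow_nonneg (norm_nonneg _) _
  have hgm : Measurable g := by fun_prop
  -- integrability of the integrands away from the origin
  have hIA : ∀ (A : Set (EuclideanSpace ℝ (Fin (n + 1)))), MeasurableSet A → ∀ ε : ℝ, 0 < ε →
      IntegrableOn (fun y => nmcIntegrand n s A 0 y) (Metric.ball (0:EuclideanSpace ℝ (Fin (n + 1))) ε)ᶜ := by
    intro A hA ε hε
    refine (aux_integrableOn_rpow n hrn hε).mono'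
      ((aux_measurable n s hA).aestronglyMeasurable.restrict) (ae_of_all _ fun y => ?_)
    rw [Real.norm_eq_abs]
    exact aux_bound n s A y
  -- the key pointwise identity
  have hkey : ∀ y : EuclideanSpace ℝ (Fin (n + 1)), nmcIntegrand n s B 0 y - nmcIntegrand n s E 0 y
      = 2 * Set.indicator D g y := by
    intro y
    by_cases hyB : y ∈ B
    · have hyE : y ∈ E := hball hyB
      have hyD : y ∉ D := fun h => h.2 hyB
      simp only [nmcIntegrand, Set.indicator_of_notMem hyD,
        Set.indicator_of_mem hyB, Set.indicator_of_mem hyE,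
        Set.indicator_of_notMem (Set.notMem_compl_iff.2 hyB),
        Set.indicator_of_notMem (Set.notMem_compl_iff.2 hyE)]
      ring
    · by_cases hyE : y ∈ E
      · have hyD : y ∈ D := ⟨hyE, hyB⟩
        simp only [nmcIntegrand, Set.indicator_of_mem hyD,
          Set.indicator_of_notMem hyB, Set.indicator_of_mem hyE,
          Set.indicator_of_mem (Set.mem_compl hyB),
          Set.indicator_of_notMem (Set.notMem_compl_iff.2 hyE), hgdef, zero_sub, norm_neg]
        ring
      · have hyD : y ∉ D := fun h => hyE h.1
        simp only [nmcIntegrand, Set.indicator_of_notMem hyD,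
          Set.indicator_of_notMem hyB, Set.indicator_of_notMem hyE,
          Set.indicator_of_mem (Set.mem_compl hyB),
          Set.indicator_of_mem (Set.mem_compl hyE)]
        ring
  -- difference of truncated integrals
  have hEq : ∀ ε ∈ Set.Ioi (0:ℝ),
      (∫ y in (Metric.ball (0:EuclideanSpace ℝ (Fin (n + 1))) ε)ᶜ, nmcIntegrand n s B 0 y) -
        (∫ y in (Metric.ball (0:EuclideanSpace ℝ (Fin (n + 1))) ε)ᶜ, nmcIntegrand n s E 0 y)
      = 2 * ∫ y in D ∩ (Metric.ball (0:EuclideanSpace ℝ (Fin (n + 1))) ε)ᶜ, g y := by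
    intro ε hε
    rw [← integral_sub (hIA B hBm ε hε) (hIA E hEm ε hε)]
    calc (∫ y in (Metric.ball (0:EuclideanSpace ℝ (Fin (n + 1))) ε)ᶜ, (nmcIntegrand n s B 0 y - nmcIntegrand n s E 0 y))
        = ∫ y in (Metric.ball (0:EuclideanSpace ℝ (Fin (n + 1))) ε)ᶜ, 2 * Set.indicator D g y := by
          exact integral_congr_ae (ae_of_all _ fun y => hkey y)
      _ = 2 * ∫ y in (Metric.ball (0:EuclideanSpace ℝ (Fin (n + 1))) ε)ᶜ, Set.indicator D g y := integral_const_mul _ _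
      _ = 2 * ∫ y in (Metric.ball (0:EuclideanSpace ℝ (Fin (n + 1))) ε)ᶜ ∩ D, g y := by rw [setIntegral_indicator hDm]
      _ = 2 * ∫ y in D ∩ (Metric.ball (0:EuclideanSpace ℝ (Fin (n + 1))) ε)ᶜ, g y := by rw [Set.inter_comm]
  -- limit of the doubled truncated integrals
  have hT : Tendsto (fun ε : ℝ => 2 * ∫ y in D ∩ (Metric.ball (0:EuclideanSpace ℝ (Fin (n + 1))) ε)ᶜ, g y)
      (nhdsWithin 0 (Set.Ioi 0)) (nhds (LB - LE)) := by
    refine Tendsto.congr' ?_ (hB.sub hE)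
    filter_upwards [self_mem_nhdsWithin] with ε hε
    exact hEq ε hε
  -- a sequence of radii tending to 0 from the right
  have hu : Tendsto (fun k : ℕ => 1 / ((k:ℝ) + 1)) atTop (nhdsWithin 0 (Set.Ioi 0)) := by
    refine tendsto_nhdsWithin_of_tendsto_nhds_of_eventually_within _
      tendsto_one_div_add_atTop_nhds_zero_nat (Eventually.of_forall fun k => ?_)
    have : (0:ℝ) < (k:ℝ) + 1 := by positivity
    exact Set.mem_Ioi.2 (by positivity)
  set a : ℕ → ℝ := fun k => ∫ y in D ∩ (Metric.ball (0:EuclideanSpace ℝ (Fin (n + 1))) (1 / ((k:ℝ) + 1)))ᶜ, g y with hadef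
  have hTa : Tendsto (fun k => 2 * a k) atTop (nhds (LB - LE)) := hT.comp hu
  have ha_nonneg : ∀ k, 0 ≤ a k := fun k =>
    setIntegral_nonneg (hDm.inter measurableSet_ball.compl) (fun y _ => hgnn y)
  have hdiff_nonneg : 0 ≤ LB - LE :=
    ge_of_tendsto' hTa (fun k => by linarith [ha_nonneg k])
  by_cases hDI : IntegrableOn g D
  · -- dominated convergence
    have hDCT : Tendsto a atTop (nhds (∫ y in D, g y)) := by
      have hrepr : ∀ k : ℕ, a k
          = ∫ y in D, Set.indicator (Metric.ball (0:EuclideanSpace ℝ (Fin (n + 1))) (1 / ((k:ℝ) + 1)))ᶜ g y := by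
        intro k
        rw [setIntegral_indicator measurableSet_ball.compl]
      rw [funext hrepr]
      refine tendsto_integral_of_dominated_convergence g
        (fun k => ((hgm.indicator measurableSet_ball.compl).aestronglyMeasurable).restrict)
        hDI (fun k => ae_of_all _ fun y => ?_) (ae_of_all _ fun y => ?_)
      · by_cases hy : y ∈ (Metric.ball (0:EuclideanSpace ℝ (Fin (n + 1))) (1 / ((k:ℝ) + 1)))ᶜ
        · rw [Set.indicator_of_mem hy, Real.norm_eq_abs, abs_of_nonneg (hgnn y)]
        · rw [Set.indicator_of_notMem hy]
          simpa using hgnn y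
      · by_cases hy : y = (0:EuclideanSpace ℝ (Fin (n + 1)))
        · subst hy
          have hz : ∀ k : ℕ, Set.indicator (Metric.ball (0:EuclideanSpace ℝ (Fin (n + 1))) (1 / ((k:ℝ) + 1)))ᶜ g (0:EuclideanSpace ℝ (Fin (n + 1))) = 0 := by
            intro k
            apply Set.indicator_of_notMem
            simp only [Set.notMem_compl_iff, Metric.mem_ball, dist_self]
            positivity
          have hg0 : g (0:EuclideanSpace ℝ (Fin (n + 1))) = 0 := by
            simp [hgdef, Real.zero_rpow (neg_ne_zero.2 (ne_of_gt hr0))]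
          rw [hg0]
          exact tendsto_const_nhds.congr (fun k => (hz k).symm)
        · have hy' : (0:ℝ) < ‖y‖ := norm_pos_iff.2 hy
          obtain ⟨k0, hk0⟩ := exists_nat_gt (1 / ‖y‖)
          refine tendsto_const_nhds.congr' ?_
          filter_upwards [eventually_ge_atTop k0] with k hk
          have h1 : 1 / ‖y‖ < (k:ℝ) + 1 := by
            calc 1 / ‖y‖ < (k0:ℝ) := hk0
              _ ≤ (k:ℝ) := by exact_mod_cast hk
              _ < (k:ℝ) + 1 := by linarith
          have h2 : 1 / ((k:ℝ) + 1) < ‖y‖ := by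
            rw [div_lt_iff₀ (by positivity)]
            rw [div_lt_iff₀ hy'] at h1
            linarith
          have hmem : y ∈ (Metric.ball (0:EuclideanSpace ℝ (Fin (n + 1))) (1 / ((k:ℝ) + 1)))ᶜ := by
            simp only [Set.mem_compl_iff, Metric.mem_ball, dist_zero_right, not_lt]
            exact h2.le
          exact (Set.indicator_of_mem hmem g).symm
    have h2T : Tendsto (fun k => 2 * a k) atTop (nhds (2 * ∫ y in D, g y)) :=
      hDCT.const_mul 2
    have heq : 2 * ∫ y in D, g y = LB - LE := tendsto_nhds_unique h2T hTa
    have : (∫ y in D, g y) = (LB - LE) / 2 := by linarith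
    rw [this]
    linarith
  · rw [integral_undef hDI]
    linarith
end

section
/- Let n ≥ 1, α ∈ (0,1), ℓ ∈ (0,1), and p = (p', p_{n+1}) ∈ ℝ^{n+1} with p_{n+1} = ε^{1−α}|p'|^α for some ε > 0. Suppose x = (x', x_{n+1}) ∈ ℝ^{n+1} satisfies x_{n+1} + (ℓ/4)|x' − p'| < p_{n+1}, |x'| ≥ 1, and that ε^{1−α} ≤ 1/j and jℓ > 4 for some j ≥ 1. Then x_{n+1} < ε^{1−α}|x'|^α, i.e., x lies in the subgraph {y_{n+1} < ε^{1−α}|y'|^α}. -/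
theorem cone_inclusion_in_barrier (n : ℕ) (hn : 0 < n) (α l ε j : ℝ)
    (hα : α ∈ Set.Ioo (0:ℝ) 1) (hl : l ∈ Set.Ioo (0:ℝ) 1) (hε : 0 < ε) (hj : 1 ≤ j)
    (p x : EuclideanSpace ℝ (Fin n) × ℝ)
    (hp : p.2 = ε ^ (1 - α) * ‖p.1‖ ^ α)
    (hx : x.2 + (l / 4) * ‖x.1 - p.1‖ < p.2)
    (hx1 : 1 ≤ ‖x.1‖) (hεj : ε ^ (1 - α) ≤ 1 / j) (hjl : 4 < j * l) :
    x.2 < ε ^ (1 - α) * ‖x.1‖ ^ α := by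
  set a := ‖x.1‖ with ha
  set t := ‖x.1 - p.1‖ with htdef
  have ht : (0:ℝ) ≤ t := norm_nonneg _
  have ha0 : (0:ℝ) < a := lt_of_lt_of_le one_pos hx1
  have hα0 : (0:ℝ) < α := hα.1
  have hα1 : α ≤ 1 := hα.2.le
  have hεnn : (0:ℝ) ≤ ε ^ (1 - α) := Real.rpow_nonneg hε.le _
  -- key: ‖p.1‖^α ≤ a^α + t
  have hpa : ‖p.1‖ ≤ a + t := by
    have : p.1 = x.1 - (x.1 - p.1) := by abel
    rw [this]
    exact norm_sub_le _ _
  have haα : a ^ α ≤ a := by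
    nth_rewrite 2 [← Real.rpow_one a]
    exact Real.rpow_le_rpow_of_exponent_le hx1 hα1
  have haαnn : (0:ℝ) ≤ a ^ α := Real.rpow_nonneg ha0.le _
  have key : ‖p.1‖ ^ α ≤ a ^ α + t := by
    have h1 : ‖p.1‖ ^ α ≤ (a + t) ^ α :=
      Real.rpow_le_rpow (norm_nonneg _) hpa hα0.le
    have h2 : (a + t) ^ α = a ^ α * (1 + t / a) ^ α := by
      rw [← Real.mul_rpow ha0.le (by positivity)]
      congr 1
      field_simp
    have h3 : (1 + t / a) ^ α ≤ 1 + α * (t / a) :=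
      rpow_one_add_le_one_add_mul_self (by linarith [div_nonneg ht ha0.le]) hα0.le hα1
    have h4 : a ^ α * (1 + α * (t / a)) ≤ a ^ α + t := by
      rw [div_eq_mul_inv]
      have hstep : a ^ α * α * t * a⁻¹ ≤ t := by
        have h5 : a ^ α * α * t * a⁻¹ ≤ a * 1 * t * a⁻¹ := by
          gcongr
        have h6 : a * 1 * t * a⁻¹ = t := by
          field_simp
        linarith
      have h7 : a ^ α * (1 + α * (t * a⁻¹)) = a ^ α + a ^ α * α * t * a⁻¹ := by ring
      linarith
    calc ‖p.1‖ ^ α ≤ (a + t) ^ α := h1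
      _ = a ^ α * (1 + t / a) ^ α := h2
      _ ≤ a ^ α * (1 + α * (t / a)) :=
        mul_le_mul_of_nonneg_left h3 haαnn
      _ ≤ a ^ α + t := h4
  have hεl : ε ^ (1 - α) ≤ l / 4 := by
    have hj0 : (0:ℝ) < j := lt_of_lt_of_le one_pos hj
    have : 1 / j ≤ l / 4 := by
      rw [div_le_div_iff₀ hj0 (by norm_num)]
      linarith
    linarith
  have : ε ^ (1 - α) * ‖p.1‖ ^ α ≤ ε ^ (1 - α) * a ^ α + (l / 4) * t :=
    calc ε ^ (1 - α) * ‖p.1‖ ^ α ≤ ε ^ (1 - α) * (a ^ α + t) :=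
          mul_le_mul_of_nonneg_left key hεnn
      _ = ε ^ (1 - α) * a ^ α + ε ^ (1 - α) * t := by ring
      _ ≤ ε ^ (1 - α) * a ^ α + (l / 4) * t := by
          gcongr
  rw [hp] at hx
  linarith
end
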